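/- arXiv:2603.27424 — 6 statements merged into one kernel-verified Lean document; each statement's English description precedes it below -/
import Mathlib

section
/- The linear program max 1^T c subject to Zc ≤ x, c ≥ 0 (over edges of S) and the linear program max 1^T d subject to \hat{Z} d ≤ (x;x), d ≥ 0 (over edges of the associated bipartite double cover B) have the same optimal value. -/
section Aux
variable {q m : ℕ} (ep : Fin m → Fin q × Fin q)

/-- Number of edges with ordered endpoint pair `p`. -/
noncomputable def Mcount (p : Fin q × Fin q) : ℝ := ∑ e, if ep e = p then (1:ℝ) else 0

/-- Number of edges with endpoints `p` in either orientation (loops counted twice). -/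
noncomputable def Ncount (p : Fin q × Fin q) : ℝ := Mcount ep p + Mcount ep p.swap

lemma Mcount_nonneg (p) : 0 ≤ Mcount ep p :=
  Finset.sum_nonneg fun _ _ => by positivity

lemma Ncount_nonneg (p) : 0 ≤ Ncount ep p :=
  add_nonneg (Mcount_nonneg ep p) (Mcount_nonneg ep p.swap)

lemma Ncount_swap (p) : Ncount ep p.swap = Ncount ep p := by
  simp [Ncount, add_comm]

lemma one_le_Mcount {e : Fin m} {p : Fin q × Fin q} (h : ep e = p) : 1 ≤ Mcount ep p := by
  have := Finset.single_le_sum (f := fun e' => if ep e' = p then (1:ℝ) else 0)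
    (fun i _ => by positivity) (Finset.mem_univ e)
  simpa [Mcount, h] using this

lemma sum_comp_eq (g : Fin q × Fin q → ℝ) :
    ∑ e, g (ep e) = ∑ p, Mcount ep p * g p := by
  have : ∀ e, g (ep e) = ∑ p, if ep e = p then g p else 0 := by
    intro e; rw [Finset.sum_ite_eq]; simp
  simp_rw [this, Mcount, Finset.sum_mul]
  rw [Finset.sum_comm]
  refine Finset.sum_congr rfl fun p _ => Finset.sum_congr rfl fun e _ => ?_
  by_cases h : ep e = p <;> simp [h]

lemma sum_swap_eq (g : Fin q × Fin q → ℝ) :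
    ∑ p : Fin q × Fin q, g p.swap = ∑ p, g p :=
  Fintype.sum_equiv (Equiv.prodComm _ _) _ _ (fun _ => rfl)

lemma key_sum (d : Fin q × Fin q → ℝ) (hd0 : ∀ p, Ncount ep p = 0 → d p = 0)
    (w : Fin q × Fin q → ℝ) (hw : ∀ p, w p.swap = w p) :
    ∑ e, w (ep e) * ((d (ep e) + d ((ep e).swap)) / Ncount ep (ep e)) = ∑ p, w p * d p := by
  set F : Fin q × Fin q → ℝ := fun p => w p * ((d p + d p.swap) / Ncount ep p) with hFdef
  have hF : ∀ p, F p.swap = F p := by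
    intro p; simp [hFdef, Ncount_swap, hw, Prod.swap_swap, add_comm]
  have h1 : ∑ e, w (ep e) * ((d (ep e) + d ((ep e).swap)) / Ncount ep (ep e))
      = ∑ p, Mcount ep p * F p := sum_comp_eq ep F
  have h2 : ∑ p, Mcount ep p * F p = ∑ p, Mcount ep p.swap * F p := by
    have h := sum_swap_eq (q := q) (fun p => Mcount ep p.swap * F p)
    simp only [Prod.swap_swap, hF] at h
    exact h
  have h3 : ∀ p, Ncount ep p * F p = w p * (d p + d p.swap) := by
    intro p
    by_cases hN : Ncount ep p = 0
    · have hdp := hd0 p hN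
      have hdsp := hd0 p.swap (by rw [Ncount_swap]; exact hN)
      simp [hFdef, hdp, hdsp]
    · simp only [hFdef]
      field_simp
  have h4 : ∑ p, w p * d p.swap = ∑ p, w p * d p := by
    have h := sum_swap_eq (q := q) (fun p => w p.swap * d p)
    simp only [Prod.swap_swap, hw] at h
    exact h
  have h5 : ∑ p, Ncount ep p * F p = 2 * ∑ p, w p * d p := by
    calc ∑ p, Ncount ep p * F p = ∑ p, (w p * d p + w p * d p.swap) := by
          refine Finset.sum_congr rfl fun p _ => ?_
          rw [h3]; ring
      _ = ∑ p, w p * d p + ∑ p, w p * d p.swap := Finset.sum_add_distrib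
      _ = 2 * ∑ p, w p * d p := by rw [h4]; ring
  have h6 : ∑ p, Ncount ep p * F p
      = ∑ p, Mcount ep p * F p + ∑ p, Mcount ep p.swap * F p := by
    simp only [Ncount]
    rw [← Finset.sum_add_distrib]
    exact Finset.sum_congr rfl fun p _ => by ring
  rw [h1]
  rw [← h2] at h6
  linarith

lemma sum_ind_fst (e : Fin m) (i : Fin q) :
    ∑ j, (if ep e = (i, j) then (1:ℝ) else 0) = if (ep e).1 = i then 1 else 0 := by
  rcases h : ep e with ⟨a, b⟩
  by_cases ha : a = i <;> simp [Prod.ext_iff, ha, Finset.sum_ite_eq]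

lemma sum_ind_snd (e : Fin m) (i : Fin q) :
    ∑ j, (if ep e = (j, i) then (1:ℝ) else 0) = if (ep e).2 = i then 1 else 0 := by
  rcases h : ep e with ⟨a, b⟩
  by_cases hb : b = i <;> simp [Prod.ext_iff, hb, Finset.sum_ite_eq, and_comm]

lemma sum_ind_all (e : Fin m) : ∑ p : Fin q × Fin q, (if ep e = p then (1:ℝ) else 0) = 1 := by
  rw [Finset.sum_ite_eq]; simp

lemma sum_ind_all_swap (e : Fin m) :
    ∑ p : Fin q × Fin q, (if ep e = p.swap then (1:ℝ) else 0) = 1 := by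
  have := sum_swap_eq (q := q) (fun p => if ep e = p then (1:ℝ) else 0)
  rw [this]; exact sum_ind_all ep e

lemma sum_d_fst (i : Fin q) (d : Fin q × Fin q → ℝ) :
    ∑ p : Fin q × Fin q, (if p.1 = i then (1:ℝ) else 0) * d p = ∑ j, d (i, j) := by
  rw [Fintype.sum_prod_type]
  simp [ite_mul, Finset.sum_ite_eq]

lemma sum_d_snd (i : Fin q) (d : Fin q × Fin q → ℝ) :
    ∑ p : Fin q × Fin q, (if p.2 = i then (1:ℝ) else 0) * d p = ∑ j, d (j, i) := by
  rw [Fintype.sum_prod_type_right]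
  simp [ite_mul, Finset.sum_ite_eq]

end Aux

/-- The LP `max 1ᵀc s.t. Zc ≤ x, c ≥ 0` (over the edges of `S`, where `Z` is the
half-incidence matrix of `S`) and the LP `max 1ᵀd s.t. Ẑd ≤ (x;x), d ≥ 0` over the
edges of the bipartite double cover `B` of `S` have the same optimal value.
Here `S` has `q` nodes and `m` edges given by endpoints `ep`, `adj` is its adjacency
relation (self-loops allowed), and the edges of `B` are the pairs `(u'_i, u''_j)`
with `adj i j`; the row constraints of `Ẑ d ≤ (x;x)` are
`∀ i, ∑_j d (i,j) ≤ x i` (rows `u'_i`) and `∀ i, ∑_j d (j,i) ≤ x i` (rows `u''_i`). -/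
theorem lp_S_eq_lp_bipartite
    (q m : ℕ) (ep : Fin m → Fin q × Fin q)
    (adj : Fin q → Fin q → Prop)
    (hadj : ∀ i j, adj i j ↔ ∃ e, ep e = (i, j) ∨ ep e = (j, i))
    (x : Fin q → ℕ) :
    sSup {v : ℝ | ∃ c : Fin m → ℝ, (∀ e, 0 ≤ c e) ∧
        (∀ i, ∑ e, ((if (ep e).1 = i then (1 : ℝ) else 0)
            + (if (ep e).2 = i then (1 : ℝ) else 0)) / 2 * c e ≤ (x i : ℝ)) ∧
        v = ∑ e, c e}
      = sSup {v : ℝ | ∃ d : Fin q × Fin q → ℝ, (∀ p, 0 ≤ d p) ∧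
        (∀ p, ¬ adj p.1 p.2 → d p = 0) ∧
        (∀ i, ∑ j, d (i, j) ≤ (x i : ℝ)) ∧
        (∀ i, ∑ j, d (j, i) ≤ (x i : ℝ)) ∧
        v = ∑ p, d p} := by
  have hxnn : ∀ i : Fin q, (0:ℝ) ≤ (x i : ℝ) := fun i => Nat.cast_nonneg _
  -- both sets contain 0
  have h0A : (0:ℝ) ∈ {v : ℝ | ∃ c : Fin m → ℝ, (∀ e, 0 ≤ c e) ∧
      (∀ i, ∑ e, ((if (ep e).1 = i then (1 : ℝ) else 0)
          + (if (ep e).2 = i then (1 : ℝ) else 0)) / 2 * c e ≤ (x i : ℝ)) ∧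
      v = ∑ e, c e} :=
    ⟨fun _ => 0, fun _ => le_rfl, fun i => by simpa using hxnn i, by simp⟩
  have h0B : (0:ℝ) ∈ {v : ℝ | ∃ d : Fin q × Fin q → ℝ, (∀ p, 0 ≤ d p) ∧
      (∀ p, ¬ adj p.1 p.2 → d p = 0) ∧
      (∀ i, ∑ j, d (i, j) ≤ (x i : ℝ)) ∧
      (∀ i, ∑ j, d (j, i) ≤ (x i : ℝ)) ∧
      v = ∑ p, d p} :=
    ⟨fun _ => 0, fun _ => le_rfl, fun _ _ => rfl, fun i => by simpa using hxnn i,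
      fun i => by simpa using hxnn i, by simp⟩
  -- both sets are bounded above by ∑ i, x i
  have hBddA : BddAbove {v : ℝ | ∃ c : Fin m → ℝ, (∀ e, 0 ≤ c e) ∧
      (∀ i, ∑ e, ((if (ep e).1 = i then (1 : ℝ) else 0)
          + (if (ep e).2 = i then (1 : ℝ) else 0)) / 2 * c e ≤ (x i : ℝ)) ∧
      v = ∑ e, c e} := by
    refine ⟨∑ i, (x i : ℝ), ?_⟩
    rintro v ⟨c, hc0, hrow, rfl⟩
    have h1 : ∑ i, ∑ e, ((if (ep e).1 = i then (1 : ℝ) else 0)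
        + (if (ep e).2 = i then (1 : ℝ) else 0)) / 2 * c e ≤ ∑ i, (x i : ℝ) :=
      Finset.sum_le_sum fun i _ => hrow i
    have h2 : ∑ i, ∑ e, ((if (ep e).1 = i then (1 : ℝ) else 0)
        + (if (ep e).2 = i then (1 : ℝ) else 0)) / 2 * c e = ∑ e, c e := by
      rw [Finset.sum_comm]
      refine Finset.sum_congr rfl fun e _ => ?_
      rw [← Finset.sum_mul]
      have hco : ∑ i, ((if (ep e).1 = i then (1 : ℝ) else 0)
          + (if (ep e).2 = i then (1 : ℝ) else 0)) / 2 = 1 := by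
        rw [← Finset.sum_div, Finset.sum_add_distrib]
        simp [Finset.sum_ite_eq]
      rw [hco, one_mul]
    linarith
  have hBddB : BddAbove {v : ℝ | ∃ d : Fin q × Fin q → ℝ, (∀ p, 0 ≤ d p) ∧
      (∀ p, ¬ adj p.1 p.2 → d p = 0) ∧
      (∀ i, ∑ j, d (i, j) ≤ (x i : ℝ)) ∧
      (∀ i, ∑ j, d (j, i) ≤ (x i : ℝ)) ∧
      v = ∑ p, d p} := by
    refine ⟨∑ i, (x i : ℝ), ?_⟩
    rintro v ⟨d, hd0, _, hrow, _, rfl⟩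
    calc ∑ p, d p = ∑ i, ∑ j, d (i, j) := Fintype.sum_prod_type _
      _ ≤ ∑ i, (x i : ℝ) := Finset.sum_le_sum fun i _ => hrow i
  apply le_antisymm
  · -- from a feasible c build a feasible d
    apply Real.sSup_le _ (le_csSup hBddB h0B)
    rintro v ⟨c, hc0, hrow, rfl⟩
    set d : Fin q × Fin q → ℝ := fun p =>
      (∑ e, ((if ep e = p then (1:ℝ) else 0) + (if ep e = p.swap then (1:ℝ) else 0)) * c e) / 2
      with hddef
    have hd0 : ∀ p, 0 ≤ d p := by
      intro p
      refine div_nonneg (Finset.sum_nonneg fun e _ => mul_nonneg (by positivity) (hc0 e))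
        (by norm_num)
    have hdadj : ∀ p : Fin q × Fin q, ¬ adj p.1 p.2 → d p = 0 := by
      intro p hp
      rw [hadj] at hp
      push_neg at hp
      simp only [hddef]
      rw [Finset.sum_eq_zero, zero_div]
      intro e _
      have h1 : ep e ≠ p := by simpa using (hp e).1
      have h2 : ep e ≠ p.swap := by
        have := (hp e).2
        simpa [Prod.swap] using this
      simp [h1, h2]
    have hdrow : ∀ i, ∑ j, d (i, j) = ∑ e, ((if (ep e).1 = i then (1 : ℝ) else 0)
        + (if (ep e).2 = i then (1 : ℝ) else 0)) / 2 * c e := by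
      intro i
      calc ∑ j, d (i, j)
          = (∑ j, ∑ e, ((if ep e = (i, j) then (1:ℝ) else 0)
              + (if ep e = (j, i) then (1:ℝ) else 0)) * c e) / 2 := by
            rw [← Finset.sum_div]
            simp only [Prod.swap_prod_mk]
        _ = (∑ e, ((if (ep e).1 = i then (1 : ℝ) else 0)
              + (if (ep e).2 = i then (1 : ℝ) else 0)) * c e) / 2 := by
            rw [Finset.sum_comm]
            congr 1
            refine Finset.sum_congr rfl fun e _ => ?_
            rw [← Finset.sum_mul, Finset.sum_add_distrib, sum_ind_fst, sum_ind_snd]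
        _ = ∑ e, ((if (ep e).1 = i then (1 : ℝ) else 0)
              + (if (ep e).2 = i then (1 : ℝ) else 0)) / 2 * c e := by
            rw [Finset.sum_div]
            exact Finset.sum_congr rfl fun e _ => by ring
    have hdcol : ∀ i, ∑ j, d (j, i) = ∑ e, ((if (ep e).1 = i then (1 : ℝ) else 0)
        + (if (ep e).2 = i then (1 : ℝ) else 0)) / 2 * c e := by
      intro i
      calc ∑ j, d (j, i)
          = (∑ j, ∑ e, ((if ep e = (j, i) then (1:ℝ) else 0)
              + (if ep e = (i, j) then (1:ℝ) else 0)) * c e) / 2 := by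
            rw [← Finset.sum_div]
            simp only [Prod.swap_prod_mk]
        _ = (∑ e, ((if (ep e).1 = i then (1 : ℝ) else 0)
              + (if (ep e).2 = i then (1 : ℝ) else 0)) * c e) / 2 := by
            rw [Finset.sum_comm]
            congr 1
            refine Finset.sum_congr rfl fun e _ => ?_
            rw [← Finset.sum_mul, Finset.sum_add_distrib, sum_ind_fst, sum_ind_snd, add_comm]
        _ = ∑ e, ((if (ep e).1 = i then (1 : ℝ) else 0)
              + (if (ep e).2 = i then (1 : ℝ) else 0)) / 2 * c e := by
            rw [Finset.sum_div]
            exact Finset.sum_congr rfl fun e _ => by ring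
    have hsum : ∑ p, d p = ∑ e, c e := by
      calc ∑ p, d p
          = (∑ p : Fin q × Fin q, ∑ e, ((if ep e = p then (1:ℝ) else 0)
              + (if ep e = p.swap then (1:ℝ) else 0)) * c e) / 2 := by
            rw [← Finset.sum_div]
        _ = (∑ e, 2 * c e) / 2 := by
            rw [Finset.sum_comm]
            congr 1
            refine Finset.sum_congr rfl fun e _ => ?_
            rw [← Finset.sum_mul, Finset.sum_add_distrib, sum_ind_all, sum_ind_all_swap]
            norm_num
        _ = ∑ e, c e := by
            rw [← Finset.mul_sum]
            ring
    refine le_csSup hBddB ⟨d, hd0, hdadj, ?_, ?_, hsum.symm⟩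
    · intro i; rw [hdrow i]; exact hrow i
    · intro i; rw [hdcol i]; exact hrow i
  · -- from a feasible d build a feasible c
    apply Real.sSup_le _ (le_csSup hBddA h0A)
    rintro v ⟨d, hd0, hdadj, hrow, hcol, rfl⟩
    have hN0 : ∀ p, Ncount ep p = 0 → d p = 0 := by
      intro p hN
      have hM1 : Mcount ep p = 0 := by
        have := Mcount_nonneg ep p
        have := Mcount_nonneg ep p.swap
        simp only [Ncount] at hN
        linarith
      have hM2 : Mcount ep p.swap = 0 := by
        have := Mcount_nonneg ep p
        simp only [Ncount] at hN
        linarith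
      apply hdadj
      rw [hadj]
      rintro ⟨e, he | he⟩
      · have : ep e = p := by simpa using he
        have := one_le_Mcount ep this
        linarith
      · have : ep e = p.swap := by simpa [Prod.swap] using he
        have := one_le_Mcount ep this
        linarith
    set c : Fin m → ℝ := fun e => (d (ep e) + d ((ep e).swap)) / Ncount ep (ep e) with hcdef
    have hc0 : ∀ e, 0 ≤ c e := fun e =>
      div_nonneg (add_nonneg (hd0 _) (hd0 _)) (Ncount_nonneg ep _)
    have hcsum : ∑ e, c e = ∑ p, d p := by
      have h := key_sum ep d hN0 (fun _ => (1:ℝ)) (fun _ => rfl)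
      simpa using h
    have hcrow : ∀ i, ∑ e, ((if (ep e).1 = i then (1 : ℝ) else 0)
        + (if (ep e).2 = i then (1 : ℝ) else 0)) / 2 * c e ≤ (x i : ℝ) := by
      intro i
      set w : Fin q × Fin q → ℝ := fun p =>
        ((if p.1 = i then (1 : ℝ) else 0) + (if p.2 = i then (1 : ℝ) else 0)) / 2 with hwdef
      have hw : ∀ p : Fin q × Fin q, w p.swap = w p := by
        intro p
        simp only [hwdef, Prod.fst_swap, Prod.snd_swap]
        rw [add_comm]
      have h := key_sum ep d hN0 w hw
      have hgoal : ∑ e, ((if (ep e).1 = i then (1 : ℝ) else 0)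
          + (if (ep e).2 = i then (1 : ℝ) else 0)) / 2 * c e = ∑ p, w p * d p := h
      rw [hgoal]
      have hsplit : ∑ p, w p * d p = (∑ j, d (i, j) + ∑ j, d (j, i)) / 2 := by
        rw [← sum_d_fst i d, ← sum_d_snd i d, ← Finset.sum_add_distrib, Finset.sum_div]
        exact Finset.sum_congr rfl fun p _ => by simp only [hwdef]; ring
      rw [hsplit]
      have := hrow i
      have := hcol i
      linarith
    exact le_csSup hBddA ⟨c, hc0, hcrow, hcsum.symm⟩
end

section
/- Let c be a nonnegative integer vector indexed by edges of S, y = Zc, and let S_c be the spanning subgraph of S whose edges are those with c > 0. Then every connected component of S_c contains an even number of nodes u_i for which 2y_i is an odd integer. -/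
/-- Let `c` be a nonnegative integer vector indexed by the edges of `S`, `y = Zc`
(`Z` the half-incidence matrix), and `S_c` the spanning subgraph of `S` whose edges
are those with `c > 0`. Then every connected component of `S_c` (the set of nodes
reachable from an arbitrary node `i0` through edges with `c > 0`) contains an even
number of nodes `j` for which `2 y_j` is an odd integer. -/
theorem even_number_of_half_integer_nodes
    (q m : ℕ) (ep : Fin m → Fin q × Fin q) (c : Fin m → ℕ)
    (y : Fin q → ℝ)
    (hy : ∀ i, y i = ∑ e, ((if (ep e).1 = i then (1 : ℝ) else 0)
        + (if (ep e).2 = i then (1 : ℝ) else 0)) / 2 * (c e : ℝ))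
    (i0 : Fin q) :
    Even {j : Fin q |
        Relation.ReflTransGen
          (fun a b => ∃ e, c e ≠ 0 ∧ (ep e = (a, b) ∨ ep e = (b, a))) i0 j ∧
        ∃ n : ℤ, Odd n ∧ 2 * y j = (n : ℝ)}.ncard := by
  classical
  set r : Fin q → Fin q → Prop :=
    fun a b => ∃ e, c e ≠ 0 ∧ (ep e = (a, b) ∨ ep e = (b, a)) with hr
  set R : Fin q → Prop := fun j => Relation.ReflTransGen r i0 j with hR
  set N : Fin q → ℕ := fun j =>
    ∑ e, ((if (ep e).1 = j then c e else 0) + (if (ep e).2 = j then c e else 0)) with hN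
  have h2y : ∀ j, 2 * y j = (N j : ℝ) := by
    intro j
    rw [hy j, Finset.mul_sum, hN]
    push_cast
    refine Finset.sum_congr rfl fun e _ => ?_
    by_cases h1 : (ep e).1 = j <;> by_cases h2 : (ep e).2 = j <;> simp [h1, h2] <;> ring
  have hodd : ∀ j, (∃ n : ℤ, Odd n ∧ 2 * y j = (n : ℝ)) ↔ Odd (N j) := by
    intro j
    constructor
    · rintro ⟨n, hn, h⟩
      rw [h2y j] at h
      have : (N j : ℤ) = n := by exact_mod_cast h
      rw [← this] at hn
      exact_mod_cast hn
    · intro h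
      exact ⟨(N j : ℤ), by exact_mod_cast h, by rw [h2y j]; push_cast; ring⟩
  have hset : {j : Fin q | R j ∧ ∃ n : ℤ, Odd n ∧ 2 * y j = (n : ℝ)}
      = ↑((Finset.univ.filter R).filter fun j => Odd (N j)) := by
    ext j
    simp [hodd j, and_comm]
  rw [show {j : Fin q | Relation.ReflTransGen r i0 j ∧ ∃ n : ℤ, Odd n ∧ 2 * y j = (n : ℝ)}
      = {j : Fin q | R j ∧ ∃ n : ℤ, Odd n ∧ 2 * y j = (n : ℝ)} from rfl, hset,
    Set.ncard_coe_finset]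
  rw [← Finset.even_sum_iff_even_card_odd]
  -- it remains to show the degree sum over the component is even
  have key : ∑ j ∈ Finset.univ.filter R, N j
      = ∑ e : Fin m, ∑ j ∈ Finset.univ.filter R,
        ((if (ep e).1 = j then c e else 0) + (if (ep e).2 = j then c e else 0)) := by
    simp only [hN]
    rw [Finset.sum_comm]
  rw [key]
  refine Finset.even_sum _ fun e _ => ?_
  rw [Finset.sum_add_distrib, Finset.sum_ite_eq, Finset.sum_ite_eq]
  by_cases hc : c e = 0
  · simp [hc]
  · have hiff : R (ep e).1 ↔ R (ep e).2 := by
      constructor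
      · intro h
        exact h.tail ⟨e, hc, Or.inl (by simp)⟩
      · intro h
        exact h.tail ⟨e, hc, Or.inr (by simp)⟩
    by_cases h1 : (ep e).1 ∈ Finset.univ.filter R
    · have h2 : (ep e).2 ∈ Finset.univ.filter R := by
        simp only [Finset.mem_filter, Finset.mem_univ, true_and] at h1 ⊢
        exact hiff.mp h1
      simp [h1, h2, ← two_mul, even_two_mul]
    · have h2 : (ep e).2 ∉ Finset.univ.filter R := by
        simp only [Finset.mem_filter, Finset.mem_univ, true_and] at h1 ⊢
        exact fun h => h1 (hiff.mpr h)
      simp [h1, h2]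
end

section
/- Let x ∈ ℕ^q and let c be a nonnegative integer optimal solution of max 1^T c s.t. Zc ≤ x, c ≥ 0. In the support graph S_c, any path whose endpoints are half-integer nodes of y = Zc and whose interior nodes are all integer nodes has even length. -/
/-- Let `x ∈ ℕ^q` and let `c ∈ ℕ₀^m` be an optimal solution of the LP
`max 1ᵀc s.t. Zc ≤ x, c ≥ 0`, `y = Zc`. In the support graph `S_c`, any path
(injective sequence `w 0, …, w k` of nodes, consecutive ones joined by an edge of `S`
with positive `c`) whose endpoints are half-integer nodes (`2 y` odd) and whose
interior nodes are all integer nodes (`2 y` even) has even length. -/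
theorem path_between_half_integer_nodes_even_length
    (q m : ℕ) (ep : Fin m → Fin q × Fin q) (x : Fin q → ℕ)
    (c : Fin m → ℕ)
    (hfeas : ∀ i, ∑ e, ((if (ep e).1 = i then (1 : ℝ) else 0)
        + (if (ep e).2 = i then (1 : ℝ) else 0)) / 2 * (c e : ℝ) ≤ (x i : ℝ))
    (hopt : ∀ c' : Fin m → ℝ, (∀ e, 0 ≤ c' e) →
        (∀ i, ∑ e, ((if (ep e).1 = i then (1 : ℝ) else 0)
            + (if (ep e).2 = i then (1 : ℝ) else 0)) / 2 * c' e ≤ (x i : ℝ)) →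
        ∑ e, c' e ≤ ∑ e, (c e : ℝ))
    (y : Fin q → ℝ)
    (hy : ∀ i, y i = ∑ e, ((if (ep e).1 = i then (1 : ℝ) else 0)
        + (if (ep e).2 = i then (1 : ℝ) else 0)) / 2 * (c e : ℝ))
    (k : ℕ) (w : Fin (k + 1) → Fin q)
    (hinj : Function.Injective w)
    (hpath : ∀ j : Fin k, ∃ e, c e ≠ 0 ∧
        (ep e = (w j.castSucc, w j.succ) ∨ ep e = (w j.succ, w j.castSucc)))
    (hstart : ∃ n : ℤ, Odd n ∧ 2 * y (w 0) = (n : ℝ))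
    (hend : ∃ n : ℤ, Odd n ∧ 2 * y (w (Fin.last k)) = (n : ℝ))
    (hinterior : ∀ j : Fin (k + 1), j ≠ 0 → j ≠ Fin.last k →
        ∃ n : ℤ, Even n ∧ 2 * y (w j) = (n : ℝ)) :
    Even k := by
  by_contra hodd
  rw [Nat.not_even_iff_odd] at hodd
  have hk1 : 1 ≤ k := hodd.pos
  choose E hE0 hE1 using hpath
  -- E is injective
  have hEinj : Function.Injective E := by
    intro a b hab
    have ha := hE1 a
    have hb := hE1 b
    rw [hab] at ha
    rcases ha with ha | ha <;> rcases hb with hb | hb <;>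
        rw [ha, Prod.mk.injEq] at hb <;>
    · have h1 := congrArg Fin.val (hinj hb.1)
      have h2 := congrArg Fin.val (hinj hb.2)
      simp only [Fin.coe_castSucc, Fin.val_succ] at h1 h2
      exact Fin.ext (by omega)
  -- the perturbation weight
  set g : ℕ → ℝ := fun n => if Even n then (1/2 : ℝ) else -(1/2) with hg
  have hgpow : ∀ n, g n = (1/2) * (-1:ℝ)^n := by
    intro n
    rcases Nat.even_or_odd n with h | h <;>
      simp [hg, h, h.neg_one_pow, Nat.not_even_iff_odd]
  have hgabs : ∀ n, -(1/2 : ℝ) ≤ g n ∧ g n ≤ 1/2 := by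
    intro n
    rw [hg]
    dsimp only
    split <;> norm_num
  -- the perturbed solution
  set c' : Fin m → ℝ :=
    fun e => (c e : ℝ) + ∑ j : Fin k, if E j = e then g (j : ℕ) else 0 with hc'
  -- structure of the correction term
  have hT : ∀ e : Fin m,
      ((∀ j, E j ≠ e) ∧ (∑ j : Fin k, if E j = e then g (j : ℕ) else 0) = 0)
      ∨ ∃ j0 : Fin k, E j0 = e ∧
          (∑ j : Fin k, if E j = e then g (j : ℕ) else 0) = g (j0 : ℕ) := by
    intro e
    by_cases he : ∃ j0, E j0 = e
    · obtain ⟨j0, hj0⟩ := he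
      refine Or.inr ⟨j0, hj0, ?_⟩
      rw [Finset.sum_eq_single j0]
      · simp [hj0]
      · intro b _ hb
        rw [if_neg]
        intro hbe
        exact hb (hEinj (hbe.trans hj0.symm))
      · simp
    · push_neg at he
      exact Or.inl ⟨he, Finset.sum_eq_zero fun j _ => if_neg (he j)⟩
  -- nonnegativity
  have hnn : ∀ e, 0 ≤ c' e := by
    intro e
    rcases hT e with ⟨_, h0⟩ | ⟨j0, hj0, h0⟩
    · simp only [hc', h0, add_zero]
      positivity
    · have h1 : (1 : ℝ) ≤ (c e : ℝ) := by
        have := hE0 j0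
        rw [hj0] at this
        exact_mod_cast Nat.one_le_iff_ne_zero.mpr this
      have h2 := (hgabs (j0 : ℕ)).1
      simp only [hc', h0]
      linarith
  -- linearity splitting lemma
  have hsplit : ∀ f : Fin m → ℝ,
      ∑ e, f e * c' e = ∑ e, f e * (c e : ℝ) + ∑ j : Fin k, f (E j) * g (j : ℕ) := by
    intro f
    simp only [hc', mul_add, Finset.mul_sum, mul_ite, mul_zero]
    rw [Finset.sum_add_distrib]
    congr 1
    rw [Finset.sum_comm]
    simp [Finset.sum_ite_eq]
  -- objective value
  have hobj : ∑ e, c' e = ∑ e, (c e : ℝ) + 1 / 2 := by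
    have h := hsplit (fun _ => 1)
    simp only [one_mul] at h
    rw [h]
    congr 1
    have : ∑ j : Fin k, g (j : ℕ) = ∑ n ∈ Finset.range k, g n :=
      Fin.sum_univ_eq_sum_range _ _
    rw [this]
    simp only [hgpow]
    rw [← Finset.mul_sum, neg_one_geom_sum, if_neg (Nat.not_even_iff_odd.mpr hodd)]
    norm_num
  -- feasibility
  have hfeas' : ∀ i, ∑ e, ((if (ep e).1 = i then (1 : ℝ) else 0)
      + (if (ep e).2 = i then (1 : ℝ) else 0)) / 2 * c' e ≤ (x i : ℝ) := by
    intro i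
    have hyx : y i ≤ (x i : ℝ) := by rw [hy i]; exact hfeas i
    rw [hsplit, ← hy i]
    have hterm : ∀ j : Fin k,
        ((if (ep (E j)).1 = i then (1:ℝ) else 0) + (if (ep (E j)).2 = i then (1:ℝ) else 0))
        = (if w j.castSucc = i then (1:ℝ) else 0) + (if w j.succ = i then (1:ℝ) else 0) := by
      intro j
      rcases hE1 j with h | h <;> simp [h, add_comm]
    by_cases hi : ∃ t, w t = i
    · obtain ⟨t, ht⟩ := hi
      have hterm2 : ∀ j : Fin k,
          ((if (ep (E j)).1 = i then (1:ℝ) else 0)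
            + (if (ep (E j)).2 = i then (1:ℝ) else 0)) / 2 * g (j : ℕ)
          = ((if (j:ℕ) = (t:ℕ) then (1:ℝ) else 0)
            + (if (j:ℕ) + 1 = (t:ℕ) then (1:ℝ) else 0)) / 2 * g (j : ℕ) := by
        intro j
        rw [hterm j]
        have e1 : w j.castSucc = i ↔ (j:ℕ) = (t:ℕ) := by
          rw [← ht]
          constructor
          · intro h
            have := congrArg Fin.val (hinj h)
            simpa using this
          · intro h
            congr 1
            exact Fin.ext (by simpa using h)
        have e2 : w j.succ = i ↔ (j:ℕ) + 1 = (t:ℕ) := by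
          rw [← ht]
          constructor
          · intro h
            have := congrArg Fin.val (hinj h)
            simpa using this
          · intro h
            congr 1
            exact Fin.ext (by simpa using h)
        simp only [e1, e2]
      rw [Finset.sum_congr rfl (fun j _ => hterm2 j)]
      have hrange : ∑ j : Fin k, ((if (j:ℕ) = (t:ℕ) then (1:ℝ) else 0)
            + (if (j:ℕ) + 1 = (t:ℕ) then (1:ℝ) else 0)) / 2 * g (j : ℕ)
          = ∑ n ∈ Finset.range k, ((if n = (t:ℕ) then (1:ℝ) else 0)
            + (if n + 1 = (t:ℕ) then (1:ℝ) else 0)) / 2 * g n :=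
        Fin.sum_univ_eq_sum_range (fun n => ((if n = (t:ℕ) then (1:ℝ) else 0)
            + (if n + 1 = (t:ℕ) then (1:ℝ) else 0)) / 2 * g n) k
      rw [hrange]
      have hsum : ∀ n, ((if n = (t:ℕ) then (1:ℝ) else 0)
            + (if n + 1 = (t:ℕ) then (1:ℝ) else 0)) / 2 * g n
          = (if n = (t:ℕ) then g n / 2 else 0) + (if n + 1 = (t:ℕ) then g n / 2 else 0) := by
        intro n
        split <;> split <;> ring
      rw [Finset.sum_congr rfl (fun n _ => hsum n), Finset.sum_add_distrib]
      have hS1 : (∑ n ∈ Finset.range k, if n = (t:ℕ) then g n / 2 else 0)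
          = if (t:ℕ) ∈ Finset.range k then g (t:ℕ) / 2 else 0 :=
        Finset.sum_ite_eq' _ _ _
      -- case analysis on the position of t
      rcases Nat.lt_or_ge (t : ℕ) k with htk | htk
      · -- t is not the last vertex
        rcases Nat.eq_zero_or_pos (t : ℕ) with ht0 | ht0
        · -- t = 0 : start vertex
          have hS2 : (∑ n ∈ Finset.range k, if n + 1 = (t:ℕ) then g n / 2 else 0) = 0 :=
            Finset.sum_eq_zero fun n _ => by rw [if_neg]; omega
          rw [hS1, hS2, if_pos (Finset.mem_range.mpr htk), ht0]
          have hw0 : w 0 = i := by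
            rw [← ht]
            congr 1
            exact Fin.ext (by simpa using ht0.symm)
          obtain ⟨n, hn, hyn⟩ := hstart
          rw [hw0] at hyn
          have h1 : (n : ℝ) ≤ 2 * (x i : ℝ) := by rw [← hyn]; linarith
          have h2 : n ≤ 2 * (x i : ℤ) := by exact_mod_cast h1
          have h3 : n ≤ 2 * (x i : ℤ) - 1 := by
            rcases hn with ⟨r, hr⟩; omega
          have h4 : (n : ℝ) ≤ 2 * (x i : ℝ) - 1 := by exact_mod_cast h3
          have hg0 : g 0 = 1/2 := by simp [hg]
          rw [hg0]
          linarith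
        · -- interior vertex: contributions cancel
          have hS2 : (∑ n ∈ Finset.range k, if n + 1 = (t:ℕ) then g n / 2 else 0)
              = g ((t:ℕ) - 1) / 2 := by
            rw [Finset.sum_eq_single ((t:ℕ) - 1)]
            · rw [if_pos (by omega)]
            · intro b _ hb
              rw [if_neg]; omega
            · intro hmem
              exact absurd (Finset.mem_range.mpr (by omega)) hmem
          rw [hS1, hS2, if_pos (Finset.mem_range.mpr htk)]
          have hcancel : g (t:ℕ) / 2 + g ((t:ℕ) - 1) / 2 = 0 := by
            rcases Nat.even_or_odd (t:ℕ) with h | h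
            · have h' : ¬ Even ((t:ℕ) - 1) := by
                rw [Nat.not_even_iff_odd]
                rcases h with ⟨r, hr⟩
                exact ⟨r - 1, by omega⟩
              norm_num [hg, h, h']
            · have h' : Even ((t:ℕ) - 1) := by
                rcases h with ⟨r, hr⟩
                exact ⟨r, by omega⟩
              norm_num [hg, h', Nat.not_even_iff_odd.mpr h]
          linarith
      · -- t is the last vertex
        have htk' : (t : ℕ) = k := by omega
        have hS1' : (∑ n ∈ Finset.range k, if n = (t:ℕ) then g n / 2 else 0) = 0 := by
          rw [hS1, if_neg (by simp [htk'])]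
        have hS2 : (∑ n ∈ Finset.range k, if n + 1 = (t:ℕ) then g n / 2 else 0)
            = g (k - 1) / 2 := by
          rw [Finset.sum_eq_single (k - 1)]
          · rw [if_pos (by omega)]
          · intro b _ hb
            rw [if_neg]; omega
          · intro hmem
            exact absurd (Finset.mem_range.mpr (by omega)) hmem
        rw [hS1', hS2]
        have hwlast : w (Fin.last k) = i := by
          rw [← ht]
          congr 1
          exact Fin.ext (by simpa using htk'.symm)
        obtain ⟨n, hn, hyn⟩ := hend
        rw [hwlast] at hyn
        have h1 : (n : ℝ) ≤ 2 * (x i : ℝ) := by rw [← hyn]; linarith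
        have h2 : n ≤ 2 * (x i : ℤ) := by exact_mod_cast h1
        have h3 : n ≤ 2 * (x i : ℤ) - 1 := by
          rcases hn with ⟨r, hr⟩; omega
        have h4 : (n : ℝ) ≤ 2 * (x i : ℝ) - 1 := by exact_mod_cast h3
        have hgk : g (k - 1) = 1/2 := by
          have : Even (k - 1) := by
            rcases hodd with ⟨r, hr⟩
            exact ⟨r, by omega⟩
          simp [hg, this]
        rw [hgk]
        linarith
    · -- i is not on the path
      push_neg at hi
      have hzero : ∑ j : Fin k, ((if (ep (E j)).1 = i then (1:ℝ) else 0)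
          + (if (ep (E j)).2 = i then (1:ℝ) else 0)) / 2 * g (j : ℕ) = 0 :=
        Finset.sum_eq_zero fun j _ => by
          rw [hterm j, if_neg (hi _), if_neg (hi _)]
          ring
      rw [hzero]
      linarith
  have := hopt c' hnn hfeas'
  rw [hobj] at this
  linarith
end

section
/- Every vertex (extremal point) of the set of optimal solutions of the linear program max 1^T c subject to Zc ≤ x, c ≥ 0 is integer valued, where Z is the half-incidence matrix of a graph S possibly with self-loops and x ∈ ℕ^q. -/
open Finset
open scoped Classical

section Util
variable {α : Type*}

lemma sum_nat_eq_one {s : Finset α} {f : α → ℕ} (h : ∑ e ∈ s, f e = 1) :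
    ∃ e₀ ∈ s, f e₀ = 1 ∧ ∀ e ∈ s, e ≠ e₀ → f e = 0 := by
  classical
  have hne : ∃ e₀ ∈ s, f e₀ ≠ 0 := by
    by_contra hall
    push_neg at hall
    rw [Finset.sum_eq_zero hall] at h
    omega
  obtain ⟨e₀, he₀, hfe₀⟩ := hne
  have hsplit : f e₀ + ∑ e ∈ s.erase e₀, f e = 1 := by
    rw [Finset.add_sum_erase _ _ he₀]; exact h
  have hf1 : f e₀ = 1 := by omega
  have hz : ∑ e ∈ s.erase e₀, f e = 0 := by omega
  refine ⟨e₀, he₀, hf1, fun e he hne' => ?_⟩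
  have := (Finset.sum_eq_zero_iff.mp hz) e (Finset.mem_erase.mpr ⟨hne', he⟩)
  exact this

lemma other_spec {A : Finset α} {s : α} [DecidableEq α] (hA : A.card = 2) (hs : s ∈ A) :
    ∃ t, t ∈ A ∧ t ≠ s ∧ ∀ u ∈ A, u ≠ s → u = t := by
  obtain ⟨a, b, hab, hA2⟩ := Finset.card_eq_two.mp hA
  subst hA2
  rcases Finset.mem_insert.mp hs with h | h
  · subst h
    exact ⟨b, by simp, fun hb => hab hb.symm, by
      intro u hu hus
      rcases Finset.mem_insert.mp hu with h | h
      · exact absurd h hus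
      · simpa using h⟩
  · have hsb : s = b := by simpa using h
    subst hsb
    exact ⟨a, by simp, hab, by
      intro u hu hus
      rcases Finset.mem_insert.mp hu with h | h
      · exact h
      · exact absurd (by simpa using h) hus⟩

end Util

noncomputable section
variable {q m : ℕ}


def NNmat (ep : Fin m → Fin q × Fin q) (i : Fin q) (e : Fin m) : ℕ :=
  (if (ep e).1 = i then 1 else 0) + (if (ep e).2 = i then 1 else 0)

def Tight (ep : Fin m → Fin q × Fin q) (x : Fin q → ℕ) (c : Fin m → ℝ) (i : Fin q) : Prop :=
  ∑ e, ((if (ep e).1 = i then (1:ℝ) else 0) + (if (ep e).2 = i then (1:ℝ) else 0)) / 2 * c e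
    = (x i : ℝ)

def Tset (ep : Fin m → Fin q × Fin q) (x : Fin q → ℕ) (c : Fin m → ℝ) : Finset (Fin q) :=
  univ.filter (Tight ep x c)

def degS (ep : Fin m → Fin q × Fin q) (S : Finset (Fin m)) (i : Fin q) : ℕ :=
  ∑ e ∈ S, NNmat ep i e

def TS (ep : Fin m → Fin q × Fin q) (x : Fin q → ℕ) (c : Fin m → ℝ) (S : Finset (Fin m)) :
    Finset (Fin q) :=
  (Tset ep x c).filter (fun i => 0 < degS ep S i)

def KerP (ep : Fin m → Fin q × Fin q) (x : Fin q → ℕ) (c : Fin m → ℝ) : Prop :=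
  ∀ w : Fin m → ℝ, (∀ e, w e ≠ 0 → c e ≠ 0) →
    (∀ i, Tight ep x c i → ∑ e, (NNmat ep i e : ℝ) * w e = 0) → w = 0

lemma NN_colsum (ep : Fin m → Fin q × Fin q) (e : Fin m) :
    ∑ i, NNmat ep i e = 2 := by
  unfold NNmat
  rw [Finset.sum_add_distrib]
  simp

lemma card_bound (ep : Fin m → Fin q × Fin q) (x : Fin q → ℕ) (c : Fin m → ℝ)
    (S : Finset (Fin m)) (hsupp : ∀ e ∈ S, c e ≠ 0) (hker : KerP ep x c) :
    S.card ≤ (TS ep x c S).card := by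
  classical
  set T' := TS ep x c S with hT'
  have hli : LinearIndependent ℝ (fun (e : {e // e ∈ S}) => (fun (i : {i // i ∈ T'}) =>
      (NNmat ep i e : ℝ))) := by
    rw [Fintype.linearIndependent_iff]
    intro g hg
    set w : Fin m → ℝ := fun e => if h : e ∈ S then g ⟨e, h⟩ else 0 with hw
    have hg' : ∀ i : {i // i ∈ T'}, ∑ e : {e // e ∈ S}, g e * (NNmat ep i e : ℝ) = 0 := by
      intro i
      have := congrFun hg i
      simpa [Finset.sum_apply] using this
    have hwzero : w = 0 := by
      refine hker w (fun e he => ?_) (fun i hi => ?_)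
      · by_cases h : e ∈ S
        · exact hsupp e h
        · exact absurd (by simp [hw, h]) he
      · -- row i tight
        have hsum : ∑ e, (NNmat ep i e : ℝ) * w e = ∑ e ∈ S, (NNmat ep i e : ℝ) * w e := by
          refine (Finset.sum_subset (Finset.subset_univ S) ?_).symm
          intro e _ heS
          simp [hw, heS]
        by_cases hiT : i ∈ T'
        · rw [hsum, ← Finset.sum_attach S (fun e => (NNmat ep i e : ℝ) * w e)]
          have := hg' ⟨i, hiT⟩
          rw [← this]
          refine Finset.sum_congr rfl fun e _ => ?_
          simp [hw, e.2]
          ring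
        · -- deg = 0 at i
          have hdeg : degS ep S i = 0 := by
            by_contra hd
            exact hiT (Finset.mem_filter.mpr ⟨Finset.mem_filter.mpr ⟨Finset.mem_univ _, hi⟩,
              Nat.pos_of_ne_zero hd⟩)
          rw [hsum]
          refine Finset.sum_eq_zero fun e he => ?_
          have : NNmat ep i e = 0 := by
            have := Finset.sum_eq_zero_iff.mp hdeg e he
            exact this
          simp [this]
    intro e
    have : w e = 0 := by rw [hwzero]; rfl
    simpa [hw, e.2] using this
  have hcard := hli.fintype_card_le_finrank
  rw [Module.finrank_pi] at hcard
  simpa using hcard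

lemma counting (ep : Fin m → Fin q × Fin q) (x : Fin q → ℕ) (c : Fin m → ℝ)
    (S : Finset (Fin m)) (hsupp : ∀ e ∈ S, c e ≠ 0)
    (hdeg1 : ∀ i ∈ Tset ep x c, degS ep S i ≠ 1) (hker : KerP ep x c) :
    (∀ i ∈ TS ep x c S, degS ep S i = 2) ∧
      (∀ e ∈ S, ∀ i : Fin q, NNmat ep i e ≠ 0 → i ∈ TS ep x c S) := by
  classical
  set T' := TS ep x c S with hT'
  have h1 : ∀ i ∈ T', 2 ≤ degS ep S i := by
    intro i hi
    have h0 : 0 < degS ep S i := (Finset.mem_filter.mp hi).2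
    have hiT : i ∈ Tset ep x c := (Finset.mem_filter.mp hi).1
    have := hdeg1 i hiT
    omega
  have h3 : ∀ e, ∑ i ∈ T', NNmat ep i e ≤ 2 := by
    intro e
    calc ∑ i ∈ T', NNmat ep i e ≤ ∑ i, NNmat ep i e :=
          Finset.sum_le_sum_of_subset (Finset.subset_univ T')
      _ = 2 := NN_colsum ep e
  have h2 : ∑ i ∈ T', degS ep S i = ∑ e ∈ S, ∑ i ∈ T', NNmat ep i e := by
    unfold degS
    exact Finset.sum_comm
  have h4 : S.card ≤ T'.card := card_bound ep x c S hsupp hker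
  have chain1 : 2 * T'.card ≤ ∑ i ∈ T', degS ep S i := by
    calc 2 * T'.card = ∑ _i ∈ T', 2 := by rw [Finset.sum_const]; ring
      _ ≤ _ := Finset.sum_le_sum h1
  have chain2 : ∑ e ∈ S, ∑ i ∈ T', NNmat ep i e ≤ 2 * S.card := by
    calc ∑ e ∈ S, ∑ i ∈ T', NNmat ep i e ≤ ∑ _e ∈ S, 2 := Finset.sum_le_sum fun e _ => h3 e
      _ = 2 * S.card := by rw [Finset.sum_const]; ring
  have hEq : ∑ i ∈ T', degS ep S i = ∑ _i ∈ T', 2 ∧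
      ∑ e ∈ S, ∑ i ∈ T', NNmat ep i e = ∑ _e ∈ S, 2 := by
    constructor
    · have : ∑ _i ∈ T', 2 = 2 * T'.card := by rw [Finset.sum_const]; ring
      omega
    · have hS2 : ∑ _e ∈ S, 2 = 2 * S.card := by rw [Finset.sum_const]; ring
      omega
  constructor
  · intro i hi
    have := (Finset.sum_eq_sum_iff_of_le h1).mp hEq.1.symm
    · exact ((this i hi).symm)
  · intro e he i hNN
    have hcol := (Finset.sum_eq_sum_iff_of_le (fun e he => h3 e)).mp ?_ e he
    · -- ∑ i ∈ T', NN = 2 = total, so i with NN ≠ 0 must be in T'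
      by_contra hiT
      have hsplit : ∑ i' ∈ univ \ T', NNmat ep i' e + ∑ i' ∈ T', NNmat ep i' e
          = ∑ i', NNmat ep i' e := Finset.sum_sdiff (Finset.subset_univ T')
      have hcolsum := NN_colsum ep e
      have : ∑ i' ∈ univ \ T', NNmat ep i' e = 0 := by omega
      have hz := Finset.sum_eq_zero_iff.mp this i (Finset.mem_sdiff.mpr ⟨Finset.mem_univ _, hiT⟩)
      exact hNN hz
    · exact hEq.2


def Sk (c : Fin m → ℝ) (k : ℤ) : Finset (Fin m) :=
  univ.filter (fun e => ¬ ∃ n : ℤ, c e = (k : ℝ) * n)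

lemma NN_cast (ep : Fin m → Fin q × Fin q) (i : Fin q) (e : Fin m) :
    ((NNmat ep i e : ℝ)) = ((if (ep e).1 = i then (1:ℝ) else 0)
      + (if (ep e).2 = i then (1:ℝ) else 0)) := by
  unfold NNmat; push_cast; ring

lemma not_mem_Sk {c : Fin m → ℝ} {k : ℤ} {e : Fin m} (h : e ∉ Sk c k) :
    ∃ n : ℤ, c e = (k : ℝ) * n := by
  by_contra h'
  refine h ?_
  simp only [Sk, Finset.mem_filter, Finset.mem_univ, true_and]
  exact h'

lemma mem_Sk {c : Fin m → ℝ} {k : ℤ} {e : Fin m} (h : e ∈ Sk c k) :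
    ¬ ∃ n : ℤ, c e = (k : ℝ) * n := by
  simpa [Sk] using h

/-- tight rows sum to `2 * x i`. -/
lemma tight_sum {ep : Fin m → Fin q × Fin q} {x : Fin q → ℕ} {c : Fin m → ℝ} {i : Fin q}
    (h : Tight ep x c i) :
    ∑ e, (NNmat ep i e : ℝ) * c e = 2 * (x i : ℝ) := by
  have := h
  unfold Tight at this
  have h2 : ∑ e, (NNmat ep i e : ℝ) * c e
      = 2 * ∑ e, ((if (ep e).1 = i then (1:ℝ) else 0)
        + (if (ep e).2 = i then (1:ℝ) else 0)) / 2 * c e := by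
    rw [Finset.mul_sum]
    refine Finset.sum_congr rfl fun e _ => ?_
    rw [NN_cast]; ring
  rw [h2, this]

/-- G1: tight row sums over `Sk` are `k` times an integer, for `k ∣ 2`. -/
lemma rowint {ep : Fin m → Fin q × Fin q} {x : Fin q → ℕ} {c : Fin m → ℝ} {i : Fin q}
    {k : ℤ} (hk : k = 1 ∨ k = 2) (h : Tight ep x c i) :
    ∃ z : ℤ, ∑ e ∈ Sk c k, (NNmat ep i e : ℝ) * c e = (k : ℝ) * z := by
  classical
  set S := Sk c k
  -- choose integer witnesses on complement
  have hwit : ∀ e ∈ (univ \ S), ∃ n : ℤ, c e = (k:ℝ) * n := by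
    intro e he
    exact not_mem_Sk (by simpa using (Finset.mem_sdiff.mp he).2)
  choose nc hnc using hwit
  have hsplit : ∑ e ∈ S, (NNmat ep i e : ℝ) * c e
      = 2 * (x i : ℝ) - ∑ e ∈ (univ \ S), (NNmat ep i e : ℝ) * c e := by
    rw [← tight_sum h]
    rw [← Finset.sum_sdiff (Finset.subset_univ S)]
    ring
  have hcompl : ∑ e ∈ (univ \ S).attach, (NNmat ep i (e : Fin m) : ℝ) * c e
      = ((∑ e ∈ (univ \ S).attach, k * (NNmat ep i (e:Fin m) : ℤ) * nc e e.2 : ℤ) : ℝ) := by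
    push_cast
    refine Finset.sum_congr rfl fun e _ => ?_
    rw [hnc e e.2]
    ring
  have hdiv : ∃ z2 : ℤ, (2 : ℝ) * (x i : ℝ) = (k:ℝ) * z2 := by
    rcases hk with hk | hk <;> subst hk
    · exact ⟨2 * x i, by push_cast; ring⟩
    · exact ⟨x i, by push_cast; ring⟩
  obtain ⟨z2, hz2⟩ := hdiv
  obtain ⟨z3, hz3⟩ : ∃ z3 : ℤ, (∑ e ∈ (univ \ S).attach, k * (NNmat ep i (e:Fin m) : ℤ) * nc e e.2) = k * z3 := by
    refine ⟨∑ e ∈ (univ \ S).attach, (NNmat ep i (e:Fin m) : ℤ) * nc e e.2, ?_⟩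
    rw [Finset.mul_sum]
    exact Finset.sum_congr rfl fun e _ => by ring
  refine ⟨z2 - z3, ?_⟩
  rw [hsplit, hz2]
  rw [← Finset.sum_attach (univ \ S) (fun e => (NNmat ep i e : ℝ) * c e), hcompl, hz3]
  push_cast
  ring


lemma Sk_supp {c : Fin m → ℝ} {k : ℤ} {e : Fin m} (h : e ∈ Sk c k) : c e ≠ 0 := by
  intro h0
  exact mem_Sk h ⟨0, by simp [h0]⟩

lemma Sk_mono {c : Fin m → ℝ} {e : Fin m} (h : e ∈ Sk c 1) : e ∈ Sk c 2 := by
  refine Finset.mem_filter.mpr ⟨Finset.mem_univ _, ?_⟩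
  rintro ⟨n, hn⟩
  exact mem_Sk h ⟨2 * n, by push_cast [hn]; ring⟩

lemma deg_ne_one {ep : Fin m → Fin q × Fin q} {x : Fin q → ℕ} {c : Fin m → ℝ}
    {k : ℤ} (hk : k = 1 ∨ k = 2) {i : Fin q} (hi : Tight ep x c i) :
    degS ep (Sk c k) i ≠ 1 := by
  intro h1
  obtain ⟨e₀, he₀, hNN1, hrest⟩ := sum_nat_eq_one h1
  have hsum : ∑ e ∈ Sk c k, (NNmat ep i e : ℝ) * c e = c e₀ := by
    rw [Finset.sum_eq_single_of_mem e₀ he₀ (fun e he hne => by rw [hrest e he hne]; simp)]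
    rw [hNN1]; simp
  obtain ⟨z, hz⟩ := rowint hk hi
  rw [hsum] at hz
  exact mem_Sk he₀ ⟨z, hz⟩

lemma fract_pos_of_mem {c : Fin m → ℝ} {e : Fin m} (h : e ∈ Sk c 1) :
    0 < Int.fract (c e) := by
  rcases lt_or_eq_of_le (Int.fract_nonneg (c e)) with h' | h'
  · exact h'
  · exfalso
    refine mem_Sk h ⟨⌊c e⌋, ?_⟩
    have h2 : c e - ⌊c e⌋ = 0 := by
      have := Int.self_sub_floor (c e)
      rw [this]; exact h'.symm
    push_cast
    linarith

lemma half_integral {ep : Fin m → Fin q × Fin q} {x : Fin q → ℕ} {c : Fin m → ℝ}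
    (hker : KerP ep x c) :
    ∀ e ∈ Sk c 1, Int.fract (c e) = 1/2 := by
  classical
  set S := Sk c 1 with hS
  obtain ⟨hdeg2, hendp⟩ := counting ep x c S (fun e he => Sk_supp he)
    (fun i hi => deg_ne_one (Or.inl rfl) (Finset.mem_filter.mp hi).2) hker
  set u : Fin m → ℝ := fun e => if e ∈ S then Int.fract (c e) - 1/2 else 0 with hu
  have hu0 : u = 0 := by
    refine hker u (fun e he => ?_) (fun i hi => ?_)
    · by_cases h : e ∈ S
      · exact Sk_supp h
      · exact absurd (by simp [hu, h]) he
    · have hsum : ∑ e, (NNmat ep i e : ℝ) * u e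
          = ∑ e ∈ S, (NNmat ep i e : ℝ) * (Int.fract (c e) - 1/2) := by
        rw [← Finset.sum_subset (Finset.subset_univ S)
          (fun e _ heS => by simp [hu, heS])]
        refine Finset.sum_congr rfl fun e he => ?_
        simp [hu, he]
      by_cases hiT : i ∈ TS ep x c S
      · -- the fractional-part row sum equals 1
        have hdeg : degS ep S i = 2 := hdeg2 i hiT
        have hM : ∃ zM : ℤ, ∑ e ∈ S, (NNmat ep i e : ℝ) * Int.fract (c e) = zM := by
          obtain ⟨z, hz⟩ := rowint (Or.inl rfl) (c := c) (x := x)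
            (Finset.mem_filter.mp (Finset.mem_filter.mp hiT).1).2
          refine ⟨z - ∑ e ∈ S.attach, (NNmat ep i (e : Fin m) : ℤ) * ⌊c e⌋, ?_⟩
          have hfr : ∀ e ∈ S, (NNmat ep i e : ℝ) * Int.fract (c e)
              = (NNmat ep i e : ℝ) * c e - (NNmat ep i e : ℝ) * (⌊c e⌋ : ℝ) := by
            intro e _
            rw [Int.fract]
            ring
          rw [Finset.sum_congr rfl hfr, Finset.sum_sub_distrib]
          rw [hz]
          rw [← Finset.sum_attach S (fun e => (NNmat ep i e : ℝ) * (⌊c e⌋ : ℝ))]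
          push_cast
          ring
        obtain ⟨zM, hzM⟩ := hM
        have hpos : 0 < degS ep S i := (Finset.mem_filter.mp hiT).2
        obtain ⟨e', he', hNNe'⟩ : ∃ e' ∈ S, NNmat ep i e' ≠ 0 := by
          by_contra hno
          push_neg at hno
          rw [degS, Finset.sum_eq_zero hno] at hpos
          omega
        have hMpos : 0 < ∑ e ∈ S, (NNmat ep i e : ℝ) * Int.fract (c e) := by
          refine Finset.sum_pos' (fun e _ => ?_) ⟨e', he', ?_⟩
          · exact mul_nonneg (by positivity) (Int.fract_nonneg _)
          · have h1 : (1:ℝ) ≤ (NNmat ep i e' : ℝ) := by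
              exact_mod_cast Nat.one_le_iff_ne_zero.mpr hNNe'
            have := fract_pos_of_mem he'
            nlinarith
        have hMlt : ∑ e ∈ S, (NNmat ep i e : ℝ) * Int.fract (c e) < 2 := by
          have hlt : ∑ e ∈ S, (NNmat ep i e : ℝ) * Int.fract (c e)
              < ∑ e ∈ S, (NNmat ep i e : ℝ) * 1 := by
            refine Finset.sum_lt_sum (fun e he => ?_) ⟨e', he', ?_⟩
            · exact mul_le_mul_of_nonneg_left (le_of_lt (Int.fract_lt_one _)) (by positivity)
            · have h1 : (1:ℝ) ≤ (NNmat ep i e' : ℝ) := by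
                exact_mod_cast Nat.one_le_iff_ne_zero.mpr hNNe'
              have := Int.fract_lt_one (c e')
              nlinarith
          have : ∑ e ∈ S, (NNmat ep i e : ℝ) * 1 = 2 := by
            simp only [mul_one]
            rw [show ∑ e ∈ S, (NNmat ep i e : ℝ) = ((∑ e ∈ S, NNmat ep i e : ℕ) : ℝ) by
              push_cast; rfl]
            rw [← degS, hdeg]
            norm_num
          linarith
        have hzM1 : zM = 1 := by
          rw [hzM] at hMpos hMlt
          exact_mod_cast (by constructor <;> [exact_mod_cast hMpos; exact_mod_cast hMlt] :
            (0:ℤ) < zM ∧ (zM:ℝ) < 2).elim (fun h1 h2 => by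
              have h2' : zM < 2 := by exact_mod_cast h2
              omega)
        rw [hsum]
        have : ∑ e ∈ S, (NNmat ep i e : ℝ) * (Int.fract (c e) - 1/2)
            = (∑ e ∈ S, (NNmat ep i e : ℝ) * Int.fract (c e))
              - (1/2) * ((degS ep S i : ℕ) : ℝ) := by
          rw [Finset.sum_congr rfl (fun e _ => by ring :
            ∀ e ∈ S, (NNmat ep i e : ℝ) * (Int.fract (c e) - 1/2)
              = (NNmat ep i e : ℝ) * Int.fract (c e) - (1/2) * (NNmat ep i e : ℝ))]
          rw [Finset.sum_sub_distrib, ← Finset.mul_sum]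
          rw [show ∑ e ∈ S, (NNmat ep i e : ℝ) = ((∑ e ∈ S, NNmat ep i e : ℕ) : ℝ) by
            push_cast; rfl]
          rfl
        rw [this, hzM, hzM1, hdeg]
        norm_num
      · -- i not in TS: all relevant entries vanish
        rw [hsum]
        refine Finset.sum_eq_zero fun e he => ?_
        have : NNmat ep i e = 0 := by
          by_contra hne
          exact hiT (hendp e he i hne)
        simp [this]
  intro e he
  have : u e = 0 := by rw [hu0]; rfl
  simp only [hu, if_pos he] at this
  linarith

lemma deg_mono {ep : Fin m → Fin q × Fin q} {S S' : Finset (Fin m)} (h : S ⊆ S') (i : Fin q) :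
    degS ep S i ≤ degS ep S' i :=
  Finset.sum_le_sum_of_subset h

lemma row_even {ep : Fin m → Fin q × Fin q} {x : Fin q → ℕ} {c : Fin m → ℝ}
    (hker : KerP ep x c) :
    ∀ i ∈ TS ep x c (Sk c 1), ∃ z : ℤ, ∑ e ∈ Sk c 1, (NNmat ep i e : ℝ) * c e = 2 * z := by
  classical
  intro i hi
  set F := Sk c 1 with hF
  set F' := Sk c 2 with hF'
  have hsub : F ⊆ F' := fun e he => Sk_mono he
  obtain ⟨hdeg2, _⟩ := counting ep x c F (fun e he => Sk_supp he)
    (fun i hi => deg_ne_one (Or.inl rfl) (Finset.mem_filter.mp hi).2) hker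
  obtain ⟨hdeg2', _⟩ := counting ep x c F' (fun e he => Sk_supp he)
    (fun i hi => deg_ne_one (Or.inr rfl) (Finset.mem_filter.mp hi).2) hker
  have htight : Tight ep x c i := (Finset.mem_filter.mp (Finset.mem_filter.mp hi).1).2
  have hdF : degS ep F i = 2 := hdeg2 i hi
  have hiT' : i ∈ TS ep x c F' := by
    refine Finset.mem_filter.mpr ⟨(Finset.mem_filter.mp hi).1, ?_⟩
    have h1 := deg_mono (ep := ep) hsub i
    have h0 : 0 < degS ep F i := (Finset.mem_filter.mp hi).2
    omega
  have hdF' : degS ep F' i = 2 := hdeg2' i hiT'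
  have hsplit : ∑ e ∈ F' \ F, NNmat ep i e + ∑ e ∈ F, NNmat ep i e
      = ∑ e ∈ F', NNmat ep i e := Finset.sum_sdiff hsub
  have hrest : ∑ e ∈ F' \ F, NNmat ep i e = 0 := by
    unfold degS at hdF hdF'
    omega
  obtain ⟨z, hz⟩ := rowint (Or.inr rfl) (c := c) (x := x) htight
  refine ⟨z, ?_⟩
  have hzero : ∑ e ∈ F' \ F, (NNmat ep i e : ℝ) * c e = 0 := by
    refine Finset.sum_eq_zero fun e he => ?_
    have := Finset.sum_eq_zero_iff.mp hrest e he
    simp [this]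
  have hsplit' : ∑ e ∈ F' \ F, (NNmat ep i e : ℝ) * c e + ∑ e ∈ F, (NNmat ep i e : ℝ) * c e
      = ∑ e ∈ F', (NNmat ep i e : ℝ) * c e := Finset.sum_sdiff hsub
  rw [hzero] at hsplit'
  rw [hz] at hsplit'
  push_cast at hsplit' ⊢
  linarith

lemma no_loop {ep : Fin m → Fin q × Fin q} {x : Fin q → ℕ} {c : Fin m → ℝ}
    (hker : KerP ep x c) :
    ∀ e ∈ Sk c 1, (ep e).1 ≠ (ep e).2 := by
  classical
  intro e he hloop
  set F := Sk c 1 with hF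
  obtain ⟨hdeg2, hendp⟩ := counting ep x c F (fun e he => Sk_supp he)
    (fun i hi => deg_ne_one (Or.inl rfl) (Finset.mem_filter.mp hi).2) hker
  set v := (ep e).1 with hv
  have hNN2 : NNmat ep v e = 2 := by
    unfold NNmat
    rw [if_pos rfl, if_pos hloop.symm]
  have hvT : v ∈ TS ep x c F := hendp e he v (by omega)
  have hdeg : degS ep F v = 2 := hdeg2 v hvT
  have hrest : ∑ e' ∈ F.erase e, NNmat ep v e' = 0 := by
    have hco : NNmat ep v e + ∑ e' ∈ F.erase e, NNmat ep v e' = degS ep F v :=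
      Finset.add_sum_erase F _ he
    omega
  have hsum : ∑ e' ∈ F, (NNmat ep v e' : ℝ) * c e' = 2 * c e := by
    rw [← Finset.add_sum_erase F _ he, hNN2]
    rw [Finset.sum_eq_zero (fun e' he' => by
      have := Finset.sum_eq_zero_iff.mp hrest e' he'
      simp [this])]
    push_cast
    ring
  obtain ⟨z, hz⟩ := row_even hker v hvT
  rw [hsum] at hz
  exact mem_Sk he ⟨z, by push_cast; linarith⟩

def vtx (ep : Fin m → Fin q × Fin q) (s : Fin m × Bool) : Fin q :=
  if s.2 then (ep s.1).2 else (ep s.1).1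

def slotsAt (ep : Fin m → Fin q × Fin q) (c : Fin m → ℝ) (v : Fin q) :
    Finset (Fin m × Bool) :=
  univ.filter (fun t => t.1 ∈ Sk c 1 ∧ vtx ep t = v)

lemma NN_slot (ep : Fin m → Fin q × Fin q) (i : Fin q) (u : Fin m × Bool) :
    (NNmat ep i u.1 : ℝ) = (if vtx ep u = i then (1:ℝ) else 0)
      + (if vtx ep (u.1, !u.2) = i then (1:ℝ) else 0) := by
  rcases u with ⟨e, b⟩
  cases b <;> simp [NNmat, vtx] <;> push_cast <;> split_ifs <;> norm_num

lemma vtx_mem_TS {ep : Fin m → Fin q × Fin q} {x : Fin q → ℕ} {c : Fin m → ℝ}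
    (hker : KerP ep x c) {s : Fin m × Bool} (h : s.1 ∈ Sk c 1) :
    vtx ep s ∈ TS ep x c (Sk c 1) := by
  obtain ⟨_, hendp⟩ := counting ep x c (Sk c 1) (fun e he => Sk_supp he)
    (fun i hi => deg_ne_one (Or.inl rfl) (Finset.mem_filter.mp hi).2) hker
  refine hendp s.1 h (vtx ep s) ?_
  rcases s with ⟨e, b⟩
  cases b <;> simp [NNmat, vtx] <;> omega

lemma slots_card {ep : Fin m → Fin q × Fin q} {x : Fin q → ℕ} {c : Fin m → ℝ}
    (hker : KerP ep x c) {v : Fin q} (hv : v ∈ TS ep x c (Sk c 1)) :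
    (slotsAt ep c v).card = 2 := by
  classical
  obtain ⟨hdeg2, _⟩ := counting ep x c (Sk c 1) (fun e he => Sk_supp he)
    (fun i hi => deg_ne_one (Or.inl rfl) (Finset.mem_filter.mp hi).2) hker
  have hcard : (slotsAt ep c v).card
      = ∑ p : Fin m × Bool, if p.1 ∈ Sk c 1 ∧ vtx ep p = v then 1 else 0 := by
    rw [slotsAt, Finset.card_filter]
  rw [hcard, Fintype.sum_prod_type]
  have hinner : ∀ e : Fin m,
      (∑ b : Bool, if (e ∈ Sk c 1 ∧ vtx ep (e, b) = v) then 1 else 0)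
        = if e ∈ Sk c 1 then NNmat ep v e else 0 := by
    intro e
    rw [Fintype.sum_bool]
    by_cases he : e ∈ Sk c 1
    · simp only [he, true_and, if_pos]
      simp [NNmat, vtx]
      split_ifs <;> omega
    · simp [he]
  rw [Finset.sum_congr rfl (fun e _ => hinner e)]
  rw [Finset.sum_ite_mem]
  have : univ ∩ Sk c 1 = Sk c 1 := by simp
  rw [this]
  exact hdeg2 v hv
lemma no_frac {ep : Fin m → Fin q × Fin q} {x : Fin q → ℕ} {c : Fin m → ℝ}
    (hker : KerP ep x c) : Sk c 1 = ∅ := by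
  classical
  by_contra hne
  obtain ⟨e₀, he₀⟩ := Finset.nonempty_of_ne_empty hne
  set F := Sk c 1 with hF
  obtain ⟨hdeg2, hendp⟩ := counting ep x c F (fun e he => Sk_supp he)
    (fun i hi => deg_ne_one (Or.inl rfl) (Finset.mem_filter.mp hi).2) hker
  have hhalf := half_integral hker
  have hnl := no_loop hker
  have hmemslots : ∀ s : Fin m × Bool, s.1 ∈ F → s ∈ slotsAt ep c (vtx ep s) := by
    intro s h
    exact Finset.mem_filter.mpr ⟨Finset.mem_univ _, h, rfl⟩
  -- the vertex involution
  have hPvex : ∀ s : Fin m × Bool, ∃ t : Fin m × Bool,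
      (s.1 ∈ F → (t ∈ slotsAt ep c (vtx ep s) ∧ t ≠ s ∧
        ∀ u ∈ slotsAt ep c (vtx ep s), u ≠ s → u = t)) ∧ (s.1 ∉ F → t = s) := by
    intro s
    by_cases h : s.1 ∈ F
    · obtain ⟨t, ht⟩ := other_spec (slots_card hker (vtx_mem_TS hker h)) (hmemslots s h)
      exact ⟨t, fun _ => ht, fun h' => absurd h h'⟩
    · exact ⟨s, fun h' => absurd h' h, fun _ => rfl⟩
  choose Pv hPv' using hPvex
  have hPv : ∀ s : Fin m × Bool, s.1 ∈ F → (Pv s ∈ slotsAt ep c (vtx ep s) ∧ Pv s ≠ s ∧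
      ∀ u ∈ slotsAt ep c (vtx ep s), u ≠ s → u = Pv s) := fun s => (hPv' s).1
  have hPvF : ∀ s : Fin m × Bool, s.1 ∈ F → (Pv s).1 ∈ F ∧ vtx ep (Pv s) = vtx ep s := by
    intro s h
    have := (hPv s h).1
    have hmem := Finset.mem_filter.mp this
    exact ⟨hmem.2.1, hmem.2.2⟩
  have hPvinv : ∀ s : Fin m × Bool, s.1 ∈ F → Pv (Pv s) = s := by
    intro s h
    have h1 := hPv s h
    have h2 := hPv (Pv s) (hPvF s h).1
    rw [(hPvF s h).2] at h2
    exact (h2.2.2 s (hmemslots s h) (Ne.symm h1.2.1)).symm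
  have hPvedge : ∀ s : Fin m × Bool, s.1 ∈ F → (Pv s).1 ≠ s.1 := by
    intro s h heq
    have hne' := (hPv s h).2.1
    have hb : (Pv s).2 ≠ s.2 := by
      intro hb
      exact hne' (Prod.ext heq hb)
    have hvtxeq := (hPvF s h).2
    unfold vtx at hvtxeq
    rw [heq] at hvtxeq
    rcases hb2 : (Pv s).2 with _ | _ <;> rcases hb1 : s.2 with _ | _ <;>
        rw [hb2, hb1] at hvtxeq hb <;> simp at hvtxeq hb
    · exact hnl s.1 h hvtxeq
    · exact hnl s.1 h hvtxeq.symm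
  -- the edge involution and the composed permutation
  set Pe : Fin m × Bool → Fin m × Bool := fun s => (s.1, !s.2) with hPe
  have hPeinv : Function.Involutive Pe := by
    intro s; simp [hPe]
  have hPeF : ∀ s : Fin m × Bool, (Pe s).1 = s.1 := fun s => rfl
  have hPvinv' : Function.Involutive Pv := by
    intro s
    by_cases h : s.1 ∈ F
    · exact hPvinv s h
    · have h1 : Pv s = s := (hPv' s).2 h
      rw [h1, h1]
  set πp : Equiv.Perm (Fin m × Bool) :=
    (hPeinv.toPerm).trans (hPvinv'.toPerm) with hπp
  have hπapp : ∀ s, πp s = Pv (Pe s) := fun s => rfl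
  set n := orderOf πp with hn
  have hnpos : 0 < n := orderOf_pos πp
  set s₀ : Fin m × Bool := (e₀, false) with hs₀
  set t : ℕ → Fin m × Bool := fun k => (πp ^ k) s₀ with ht
  have ht0 : t 0 = s₀ := rfl
  have htsucc : ∀ k, t (k+1) = Pv (Pe (t k)) := by
    intro k
    have : πp ^ (k+1) = πp * πp ^ k := by rw [pow_succ']
    rw [ht]
    simp only [this, Equiv.Perm.mul_apply]
    rfl
  have htF : ∀ k, (t k).1 ∈ F := by
    intro k
    induction k with
    | zero => exact he₀
    | succ k ih =>
      rw [htsucc k]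
      exact (hPvF (Pe (t k)) (by rw [hPeF]; exact ih)).1
  have htn : t n = s₀ := by
    rw [ht]
    simp only [hn]
    rw [pow_orderOf_eq_one]
    rfl
  -- parity bookkeeping
  set a : ℕ → ℤ := fun k => ⌊c ((t k).1)⌋ with ha
  have hpair : ∀ u : Fin m × Bool, u.1 ∈ F →
      ∃ z : ℤ, ⌊c ((Pv u).1)⌋ + ⌊c u.1⌋ = 2 * z + 1 := by
    intro u hu
    set v := vtx ep u with hv
    have hvT : v ∈ TS ep x c F := vtx_mem_TS hker hu
    have hcard := slots_card hker hvT
    have hfF : (Pv u).1 ∈ F := (hPvF u hu).1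
    have hef : (Pv u).1 ≠ u.1 := hPvedge u hu
    have hPne : Pv u ≠ u := (hPv u hu).2.1
    have hPset : ({u, Pv u} : Finset (Fin m × Bool)) = slotsAt ep c v := by
      refine Finset.eq_of_subset_of_card_le ?_ ?_
      · intro p hp
        rcases Finset.mem_insert.mp hp with h | h
        · rw [h]; exact hmemslots u hu
        · rw [Finset.mem_singleton.mp h]; exact (hPv u hu).1
      · rw [hcard, Finset.card_pair (Ne.symm hPne)]
    have hNNe : ∀ s' : Fin m × Bool, s' ∈ slotsAt ep c v → NNmat ep v s'.1 = 1 := by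
      intro s' hs'
      obtain ⟨_, hs'F, hs'v⟩ := Finset.mem_filter.mp hs'
      have hnl' := hnl s'.1 hs'F
      obtain ⟨se, sb⟩ := s'
      simp only at hs'F hnl' ⊢
      cases sb
      · have h1 : (ep se).1 = v := by simpa [vtx] using hs'v
        unfold NNmat
        rw [if_pos h1, if_neg (fun h2 => hnl' (h1.trans h2.symm))]
      · have h1 : (ep se).2 = v := by simpa [vtx] using hs'v
        unfold NNmat
        rw [if_pos h1, if_neg (fun h2 => hnl' (h2.trans h1.symm))]
    have hNN1 : NNmat ep v u.1 = 1 := hNNe u (hmemslots u hu)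
    have hNN2 : NNmat ep v (Pv u).1 = 1 := hNNe (Pv u) (hPv u hu).1
    have hother : ∀ e'' ∈ F, e'' ≠ u.1 → e'' ≠ (Pv u).1 → NNmat ep v e'' = 0 := by
      intro e'' he'' h1 h2
      by_contra hNN0
      have hvor : (ep e'').1 = v ∨ (ep e'').2 = v := by
        unfold NNmat at hNN0
        by_cases hh1 : (ep e'').1 = v
        · exact Or.inl hh1
        · by_cases hh2 : (ep e'').2 = v
          · exact Or.inr hh2
          · rw [if_neg hh1, if_neg hh2] at hNN0; omega
      have hslot : ∃ b : Bool, ((e'', b) : Fin m × Bool) ∈ slotsAt ep c v := by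
        rcases hvor with h | h
        · exact ⟨false, Finset.mem_filter.mpr ⟨Finset.mem_univ _, he'', by
            unfold vtx; simpa using h⟩⟩
        · exact ⟨true, Finset.mem_filter.mpr ⟨Finset.mem_univ _, he'', by
            unfold vtx; simpa using h⟩⟩
      obtain ⟨b, hb⟩ := hslot
      rw [← hPset] at hb
      rcases Finset.mem_insert.mp hb with h | h
      · exact h1 (congrArg Prod.fst h)
      · exact h2 (congrArg Prod.fst (Finset.mem_singleton.mp h))
    have hsub2 : ({u.1, (Pv u).1} : Finset (Fin m)) ⊆ F := by
      intro p hp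
      rcases Finset.mem_insert.mp hp with h | h
      · subst h; exact hu
      · rw [Finset.mem_singleton.mp h]; exact hfF
    have hsum : ∑ e' ∈ F, (NNmat ep v e' : ℝ) * c e' = c u.1 + c ((Pv u).1) := by
      rw [← Finset.sum_subset hsub2 (fun e'' he'' hne'' => by
        have h1 : e'' ≠ u.1 := fun h => hne'' (by simp [h])
        have h2 : e'' ≠ (Pv u).1 := fun h => hne'' (by simp [h])
        rw [hother e'' he'' h1 h2]
        norm_num)]
      rw [Finset.sum_pair (Ne.symm hef)]
      rw [hNN1, hNN2]
      norm_num
    obtain ⟨zv, hzv⟩ := row_even hker v hvT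
    rw [hsum] at hzv
    have hce : c u.1 = (⌊c u.1⌋ : ℝ) + 1/2 := by
      have := hhalf u.1 hu
      rw [← Int.self_sub_floor] at this
      linarith
    have hcf : c ((Pv u).1) = (⌊c ((Pv u).1)⌋ : ℝ) + 1/2 := by
      have := hhalf (Pv u).1 hfF
      rw [← Int.self_sub_floor] at this
      linarith
    refine ⟨zv - 1, ?_⟩
    have : (⌊c ((Pv u).1)⌋ : ℝ) + (⌊c u.1⌋ : ℝ) = 2 * (zv : ℝ) - 1 := by
      rw [hce, hcf] at hzv
      push_cast at hzv ⊢
      linarith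
    have h' : ⌊c ((Pv u).1)⌋ + ⌊c u.1⌋ = 2 * zv - 1 := by exact_mod_cast this
    omega
  have hstep : ∀ k, ∃ z : ℤ, a (k+1) + a k = 2 * z + 1 := by
    intro k
    have hu : (Pe (t k)).1 ∈ F := by rw [hPeF]; exact htF k
    obtain ⟨z, hz⟩ := hpair (Pe (t k)) hu
    refine ⟨z, ?_⟩
    rw [ha]
    simp only [htsucc k]
    rw [hPeF] at hz
    exact hz
  have hparity : ∀ k, ∃ z : ℤ, a k = a 0 + k + 2 * z := by
    intro k
    induction k with
    | zero => exact ⟨0, by ring⟩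
    | succ k ih =>
      obtain ⟨z, hz⟩ := ih
      obtain ⟨w', hw'⟩ := hstep k
      refine ⟨w' - z - a 0 - k, ?_⟩
      push_cast
      push_cast at hz hw'
      linarith
  have hneven : n % 2 = 0 := by
    obtain ⟨z, hz⟩ := hparity n
    have : a n = a 0 := by show ⌊c ((t n).1)⌋ = ⌊c ((t 0).1)⌋; rw [htn, ht0]
    omega
  have hkeven : ∀ k, (t k).1 = e₀ → k % 2 = 0 := by
    intro k hk
    obtain ⟨z, hz⟩ := hparity k
    have : a k = a 0 := by
      show ⌊c ((t k).1)⌋ = ⌊c ((t 0).1)⌋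
      rw [hk, ht0]
    omega
  -- the kernel vector
  set w : Fin m → ℝ := fun e => ∑ k ∈ Finset.range n, (-1:ℝ)^k * (if (t k).1 = e then 1 else 0)
    with hw
  have hw0 : w = 0 := by
    refine hker w (fun e he => ?_) (fun i _ => ?_)
    · -- support
      by_cases hEF : e ∈ F
      · exact Sk_supp hEF
      · exfalso
        refine he ?_
        rw [hw]
        refine Finset.sum_eq_zero fun k _ => ?_
        have : (t k).1 ≠ e := fun hkk => hEF (hkk ▸ htF k)
        simp [this]
    · -- rows
      set A : ℕ → ℝ := fun k => if vtx ep (t k) = i then (1:ℝ) else 0 with hA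
      have hAn : A n = A 0 := by
        show (if vtx ep (t n) = i then (1:ℝ) else 0)
          = (if vtx ep (t 0) = i then (1:ℝ) else 0)
        rw [htn, ht0]
      have hstep2 : ∀ k, (NNmat ep i ((t k).1) : ℝ) = A k + A (k+1) := by
        intro k
        have h1 := NN_slot ep i (t k)
        have h2 : ((t k).1, !(t k).2) = Pe (t k) := rfl
        have h3 : vtx ep (Pe (t k)) = vtx ep (t (k+1)) := by
          rw [htsucc k]
          exact ((hPvF (Pe (t k)) (by rw [hPeF]; exact htF k)).2).symm
        rw [h1, h2, h3]
      have hswap : ∑ e, (NNmat ep i e : ℝ) * w e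
          = ∑ k ∈ Finset.range n, (-1:ℝ)^k * (NNmat ep i ((t k).1) : ℝ) := by
        rw [hw]
        simp only [Finset.mul_sum]
        rw [Finset.sum_comm]
        refine Finset.sum_congr rfl fun k _ => ?_
        rw [Finset.sum_eq_single_of_mem ((t k).1) (Finset.mem_univ _)
          (fun e _ hne' => by simp [Ne.symm hne'])]
        simp
        ring
      rw [hswap]
      have hsplitA : ∑ k ∈ Finset.range n, (-1:ℝ)^k * (NNmat ep i ((t k).1) : ℝ)
          = (∑ k ∈ Finset.range n, (-1:ℝ)^k * A k)
            + ∑ k ∈ Finset.range n, (-1:ℝ)^k * A (k+1) := by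
        rw [← Finset.sum_add_distrib]
        refine Finset.sum_congr rfl fun k _ => ?_
        rw [hstep2 k]
        ring
      rw [hsplitA]
      have hS2 : ∑ k ∈ Finset.range n, (-1:ℝ)^k * A (k+1)
          = - ∑ k ∈ Finset.range n, (-1:ℝ)^k * A k := by
        have h1 : ∀ k, (-1:ℝ)^k * A (k+1) = -((-1:ℝ)^(k+1) * A (k+1)) := by
          intro k
          rw [pow_succ]
          ring
        have h2 := Finset.sum_range_succ' (fun k => (-1:ℝ)^k * A k) n
        have h3 := Finset.sum_range_succ (fun k => (-1:ℝ)^k * A k) n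
        have h4 : (-1:ℝ)^n = 1 := (Nat.even_iff.mpr hneven).neg_one_pow
        rw [h3, h4, hAn] at h2
        simp at h2
        rw [Finset.sum_congr rfl (fun k _ => h1 k), Finset.sum_neg_distrib]
        exact neg_inj.mpr h2.symm
      rw [hS2]
      ring
  have : w e₀ ≠ 0 := by
    have hpos : 0 < w e₀ := by
      rw [hw]
      refine Finset.sum_pos' (fun k _ => ?_) ⟨0, Finset.mem_range.mpr hnpos, ?_⟩
      · by_cases hk : (t k).1 = e₀
        · have := hkeven k hk
          have heven : Even k := Nat.even_iff.mpr this
          rw [heven.neg_one_pow]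
          simp [hk]
        · simp [hk]
      · rw [ht0]
        simp [hs₀]
    exact ne_of_gt hpos
  rw [hw0] at this
  exact this rfl

lemma extreme_kerP {ep : Fin m → Fin q × Fin q} {x : Fin q → ℕ} {c : Fin m → ℝ}
    (hc : c ∈ Set.extremePoints ℝ
      {c : Fin m → ℝ |
        ((∀ e, 0 ≤ c e) ∧
          ∀ i, ∑ e, ((if (ep e).1 = i then (1 : ℝ) else 0)
            + (if (ep e).2 = i then (1 : ℝ) else 0)) / 2 * c e ≤ (x i : ℝ)) ∧
        ∀ c' : Fin m → ℝ, (∀ e, 0 ≤ c' e) →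
          (∀ i, ∑ e, ((if (ep e).1 = i then (1 : ℝ) else 0)
            + (if (ep e).2 = i then (1 : ℝ) else 0)) / 2 * c' e ≤ (x i : ℝ)) →
          ∑ e, c' e ≤ ∑ e, c e}) : KerP ep x c := by
  classical
  obtain ⟨hcK, hext⟩ := mem_extremePoints.mp hc
  obtain ⟨⟨hpos, hfeas⟩, hopt⟩ := hcK
  intro w hsupp hrow
  by_contra hwne
  -- abbreviations (opaque to avoid rewriting everywhere)
  obtain ⟨rowc, hrowc⟩ : ∃ f : Fin q → ℝ, f = fun i => ∑ e, ((if (ep e).1 = i then (1 : ℝ) else 0)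
      + (if (ep e).2 = i then (1 : ℝ) else 0)) / 2 * c e := ⟨_, rfl⟩
  obtain ⟨roww, hroww⟩ : ∃ f : Fin q → ℝ, f = fun i => ∑ e, ((if (ep e).1 = i then (1 : ℝ) else 0)
      + (if (ep e).2 = i then (1 : ℝ) else 0)) / 2 * w e := ⟨_, rfl⟩
  have hrowc' : ∀ i, rowc i = ∑ e, ((if (ep e).1 = i then (1 : ℝ) else 0)
      + (if (ep e).2 = i then (1 : ℝ) else 0)) / 2 * c e := fun i => by rw [hrowc]
  have hroww' : ∀ i, roww i = ∑ e, ((if (ep e).1 = i then (1 : ℝ) else 0)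
      + (if (ep e).2 = i then (1 : ℝ) else 0)) / 2 * w e := fun i => by rw [hroww]
  have hroww0 : ∀ i, Tight ep x c i → roww i = 0 := by
    intro i hi
    have h := hrow i hi
    rw [hroww' i]
    have h2 : ∑ e, ((if (ep e).1 = i then (1 : ℝ) else 0)
        + (if (ep e).2 = i then (1 : ℝ) else 0)) / 2 * w e
        = (1/2) * ∑ e, (NNmat ep i e : ℝ) * w e := by
      rw [Finset.mul_sum]
      refine Finset.sum_congr rfl fun e _ => ?_
      rw [NN_cast]
      ring
    rw [h2, h]
    ring
  have hslack : ∀ i, ¬ Tight ep x c i → rowc i < x i := by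
    intro i hi
    rw [hrowc' i]
    refine lt_of_le_of_ne (hfeas i) ?_
    intro heq
    exact hi heq
  -- epsilon
  obtain ⟨ρ, hρ⟩ : ∃ f : Fin m → ℝ, f = fun e => if w e = 0 then 1 else c e / |w e| := ⟨_, rfl⟩
  obtain ⟨σ', hσ⟩ : ∃ f : Fin q → ℝ, f = fun i => if Tight ep x c i then 1
      else ((x i : ℝ) - rowc i) / (|roww i| + 1) := ⟨_, rfl⟩
  have hρ' : ∀ e, ρ e = if w e = 0 then 1 else c e / |w e| := fun e => by rw [hρ]
  have hσ' : ∀ i, σ' i = if Tight ep x c i then 1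
      else ((x i : ℝ) - rowc i) / (|roww i| + 1) := fun i => by rw [hσ]
  obtain ⟨E, hE⟩ : ∃ E : Finset ℝ, E = (univ.image ρ) ∪ (univ.image σ') ∪ {1} := ⟨_, rfl⟩
  have hEne : E.Nonempty := ⟨1, by simp [hE]⟩
  obtain ⟨ε, hε⟩ : ∃ y : ℝ, y = E.min' hEne := ⟨_, rfl⟩
  have hcpos : ∀ e, w e ≠ 0 → 0 < c e := by
    intro e he
    rcases lt_or_eq_of_le (hpos e) with h | h
    · exact h
    · exact absurd h.symm (hsupp e he)
  have hεpos : 0 < ε := by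
    rw [hε]
    refine (Finset.lt_min'_iff E hEne).mpr ?_
    intro y hy
    rw [hE] at hy
    simp only [Finset.mem_union, Finset.mem_image, Finset.mem_singleton] at hy
    rcases hy with (⟨e, _, rfl⟩ | ⟨i, _, rfl⟩) | rfl
    · rw [hρ' e]
      by_cases h : w e = 0
      · simp [h]
      · rw [if_neg h]
        exact div_pos (hcpos e h) (abs_pos.mpr h)
    · rw [hσ' i]
      by_cases h : Tight ep x c i
      · simp [h]
      · rw [if_neg h]
        refine div_pos ?_ ?_
        · have := hslack i h
          linarith
        · positivity
    · norm_num
  have hεle : ∀ y ∈ E, ε ≤ y := fun y hy => hε ▸ Finset.min'_le E y hy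
  have hερ : ∀ e, ε ≤ ρ e := fun e => hεle _ (by
    rw [hE]; simp only [Finset.mem_union, Finset.mem_image]
    exact Or.inl (Or.inl ⟨e, Finset.mem_univ _, rfl⟩))
  have hεσ : ∀ i, ε ≤ σ' i := fun i => hεle _ (by
    rw [hE]; simp only [Finset.mem_union, Finset.mem_image]
    exact Or.inl (Or.inr ⟨i, Finset.mem_univ _, rfl⟩))
  -- coordinates bound
  have hcoord : ∀ e, ε * |w e| ≤ c e ∨ w e = 0 := by
    intro e
    by_cases h : w e = 0
    · exact Or.inr h
    · left
      have h1 : ε ≤ c e / |w e| := by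
        have := hερ e
        rw [hρ' e, if_neg h] at this
        exact this
      have h2 : 0 < |w e| := abs_pos.mpr h
      calc ε * |w e| ≤ (c e / |w e|) * |w e| := by nlinarith
        _ = c e := by field_simp
  -- rows bound for slack rows
  have hrowbd : ∀ i, ¬ Tight ep x c i → rowc i + ε * |roww i| ≤ x i := by
    intro i hi
    have h1 : ε ≤ ((x i : ℝ) - rowc i) / (|roww i| + 1) := by
      have := hεσ i
      rw [hσ' i, if_neg hi] at this
      exact this
    have h2 : (0:ℝ) < |roww i| + 1 := by positivity
    have h3 : ε * (|roww i| + 1) ≤ (x i : ℝ) - rowc i := by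
      calc ε * (|roww i| + 1) ≤ (((x i : ℝ) - rowc i) / (|roww i| + 1)) * (|roww i| + 1) := by
            nlinarith
        _ = (x i : ℝ) - rowc i := by field_simp
    nlinarith [abs_nonneg (roww i), hεpos]
  -- feasibility of perturbations
  have hrowlin : ∀ (i : Fin q) (s : ℝ),
      ∑ e, ((if (ep e).1 = i then (1 : ℝ) else 0)
        + (if (ep e).2 = i then (1 : ℝ) else 0)) / 2 * (c e + s * w e)
      = rowc i + s * roww i := by
    intro i s
    rw [hrowc' i, hroww' i]
    simp only [Finset.mul_sum, ← Finset.sum_add_distrib]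
    refine Finset.sum_congr rfl fun e _ => ?_
    ring
  have hfeas12 : ∀ (s : ℝ), |s| = ε →
      (∀ e, 0 ≤ c e + s * w e) ∧
      (∀ i, ∑ e, ((if (ep e).1 = i then (1 : ℝ) else 0)
        + (if (ep e).2 = i then (1 : ℝ) else 0)) / 2 * (c e + s * w e) ≤ (x i : ℝ)) := by
    intro s hs
    constructor
    · intro e
      rcases hcoord e with h | h
      · have h1 : |s * w e| = ε * |w e| := by rw [abs_mul, hs]
        have h2 : -(ε * |w e|) ≤ s * w e := by
          rw [← h1]
          exact neg_abs_le _
        linarith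
      · simp [h, hpos e]
    · intro i
      rw [hrowlin i s]
      by_cases hi : Tight ep x c i
      · rw [hroww0 i hi]
        have h4 : rowc i = x i := by rw [hrowc' i]; exact hi
        linarith
      · have h2 : s * roww i ≤ ε * |roww i| := by
          have h3 : |s * roww i| = ε * |roww i| := by rw [abs_mul, hs]
          have := le_abs_self (s * roww i)
          linarith
        have := hrowbd i hi
        linarith
  have hfeas1 := hfeas12 ε (abs_of_pos hεpos)
  have hfeas2 := hfeas12 (-ε) (by rw [abs_neg]; exact abs_of_pos hεpos)
  -- the two perturbed points
  obtain ⟨c₁, hc₁⟩ : ∃ f : Fin m → ℝ, f = fun e => c e + ε * w e := ⟨_, rfl⟩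
  obtain ⟨c₂, hc₂⟩ : ∃ f : Fin m → ℝ, f = fun e => c e + (-ε) * w e := ⟨_, rfl⟩
  have hc₁' : ∀ e, c₁ e = c e + ε * w e := fun e => by rw [hc₁]
  have hc₂' : ∀ e, c₂ e = c e + (-ε) * w e := fun e => by rw [hc₂]
  have hsum1 : ∑ e, c₁ e = ∑ e, c e + ε * ∑ e, w e := by
    rw [Finset.mul_sum, ← Finset.sum_add_distrib]
    exact Finset.sum_congr rfl fun e _ => hc₁' e
  have hsum2 : ∑ e, c₂ e = ∑ e, c e + (-ε) * ∑ e, w e := by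
    rw [Finset.mul_sum, ← Finset.sum_add_distrib]
    exact Finset.sum_congr rfl fun e _ => hc₂' e
  have hfeasc₁ : (∀ e, 0 ≤ c₁ e) ∧
      (∀ i, ∑ e, ((if (ep e).1 = i then (1 : ℝ) else 0)
        + (if (ep e).2 = i then (1 : ℝ) else 0)) / 2 * c₁ e ≤ (x i : ℝ)) := by
    constructor
    · intro e; rw [hc₁' e]; exact hfeas1.1 e
    · intro i
      have := hfeas1.2 i
      rw [Finset.sum_congr rfl (fun e (_ : e ∈ univ) => by rw [hc₁' e] :
        ∀ e ∈ univ, ((if (ep e).1 = i then (1 : ℝ) else 0)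
        + (if (ep e).2 = i then (1 : ℝ) else 0)) / 2 * c₁ e
        = ((if (ep e).1 = i then (1 : ℝ) else 0)
        + (if (ep e).2 = i then (1 : ℝ) else 0)) / 2 * (c e + ε * w e))]
      exact this
  have hfeasc₂ : (∀ e, 0 ≤ c₂ e) ∧
      (∀ i, ∑ e, ((if (ep e).1 = i then (1 : ℝ) else 0)
        + (if (ep e).2 = i then (1 : ℝ) else 0)) / 2 * c₂ e ≤ (x i : ℝ)) := by
    constructor
    · intro e; rw [hc₂' e]; exact hfeas2.1 e
    · intro i
      have := hfeas2.2 i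
      rw [Finset.sum_congr rfl (fun e (_ : e ∈ univ) => by rw [hc₂' e] :
        ∀ e ∈ univ, ((if (ep e).1 = i then (1 : ℝ) else 0)
        + (if (ep e).2 = i then (1 : ℝ) else 0)) / 2 * c₂ e
        = ((if (ep e).1 = i then (1 : ℝ) else 0)
        + (if (ep e).2 = i then (1 : ℝ) else 0)) / 2 * (c e + (-ε) * w e))]
      exact this
  have hle1 : ∑ e, c₁ e ≤ ∑ e, c e := hopt c₁ hfeasc₁.1 hfeasc₁.2
  have hle2 : ∑ e, c₂ e ≤ ∑ e, c e := hopt c₂ hfeasc₂.1 hfeasc₂.2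
  have hwsum : ∑ e, w e = 0 := by
    rw [hsum1] at hle1
    rw [hsum2] at hle2
    nlinarith
  have hsum1' : ∑ e, c₁ e = ∑ e, c e := by rw [hsum1, hwsum]; ring
  have hsum2' : ∑ e, c₂ e = ∑ e, c e := by rw [hsum2, hwsum]; ring
  have hmem1 : c₁ ∈ {c : Fin m → ℝ |
        ((∀ e, 0 ≤ c e) ∧
          ∀ i, ∑ e, ((if (ep e).1 = i then (1 : ℝ) else 0)
            + (if (ep e).2 = i then (1 : ℝ) else 0)) / 2 * c e ≤ (x i : ℝ)) ∧
        ∀ c' : Fin m → ℝ, (∀ e, 0 ≤ c' e) →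
          (∀ i, ∑ e, ((if (ep e).1 = i then (1 : ℝ) else 0)
            + (if (ep e).2 = i then (1 : ℝ) else 0)) / 2 * c' e ≤ (x i : ℝ)) →
          ∑ e, c' e ≤ ∑ e, c e} := by
    refine ⟨hfeasc₁, ?_⟩
    intro c' h1 h2
    rw [hsum1']
    exact hopt c' h1 h2
  have hmem2 : c₂ ∈ {c : Fin m → ℝ |
        ((∀ e, 0 ≤ c e) ∧
          ∀ i, ∑ e, ((if (ep e).1 = i then (1 : ℝ) else 0)
            + (if (ep e).2 = i then (1 : ℝ) else 0)) / 2 * c e ≤ (x i : ℝ)) ∧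
        ∀ c' : Fin m → ℝ, (∀ e, 0 ≤ c' e) →
          (∀ i, ∑ e, ((if (ep e).1 = i then (1 : ℝ) else 0)
            + (if (ep e).2 = i then (1 : ℝ) else 0)) / 2 * c' e ≤ (x i : ℝ)) →
          ∑ e, c' e ≤ ∑ e, c e} := by
    refine ⟨hfeasc₂, ?_⟩
    intro c' h1 h2
    rw [hsum2']
    exact hopt c' h1 h2
  have hseg : c ∈ openSegment ℝ c₁ c₂ := by
    refine ⟨1/2, 1/2, by norm_num, by norm_num, by norm_num, ?_⟩
    funext e
    simp only [Pi.add_apply, Pi.smul_apply, smul_eq_mul]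
    rw [hc₁' e, hc₂' e]
    ring
  have hcc := (hext c₁ hmem1 c₂ hmem2 hseg).1
  refine hwne (funext fun e => ?_)
  have h := congrFun hcc e
  rw [hc₁' e] at h
  have hwe : w e = 0 := by
    have hεw : ε * w e = 0 := by linarith
    rcases mul_eq_zero.mp hεw with h' | h'
    · exact absurd h' (ne_of_gt hεpos)
    · exact h'
  simpa using hwe

end

/-- Every vertex (extreme point) of the polytope of optimal solutions of the LP
`max 1ᵀc s.t. Zc ≤ x, c ≥ 0` is integer valued, where `Z` is the half-incidence
matrix of a graph `S` possibly with self-loops and `x ∈ ℕ^q`. -/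
theorem extreme_points_of_Cx_integral
    (q m : ℕ) (ep : Fin m → Fin q × Fin q) (x : Fin q → ℕ)
    (c : Fin m → ℝ)
    (hc : c ∈ Set.extremePoints ℝ
      {c : Fin m → ℝ |
        ((∀ e, 0 ≤ c e) ∧
          ∀ i, ∑ e, ((if (ep e).1 = i then (1 : ℝ) else 0)
            + (if (ep e).2 = i then (1 : ℝ) else 0)) / 2 * c e ≤ (x i : ℝ)) ∧
        ∀ c' : Fin m → ℝ, (∀ e, 0 ≤ c' e) →
          (∀ i, ∑ e, ((if (ep e).1 = i then (1 : ℝ) else 0)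
            + (if (ep e).2 = i then (1 : ℝ) else 0)) / 2 * c' e ≤ (x i : ℝ)) →
          ∑ e, c' e ≤ ∑ e, c e}) :
    ∀ e, ∃ n : ℤ, c e = (n : ℝ) := by
  classical
  have hker := extreme_kerP hc
  intro e
  by_contra h
  have hmem : e ∈ Sk c 1 := by
    refine Finset.mem_filter.mpr ⟨Finset.mem_univ _, ?_⟩
    rintro ⟨n, hn⟩
    exact h ⟨n, by simpa using hn⟩
  rw [no_frac hker] at hmem
  simp at hmem
end

section
/- If c is a vertex of the optimal-solution polytope of the linear program max 1^T c subject to Zc ≤ x, c ≥ 0 (with x a positive integer vector), then y = Zc is integer valued. -/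
/-!
A vertex of the optimal face is a vertex of the feasible polyhedron `{c | 0 ≤ c, Z c ≤ x}`, so no
nonzero direction supported on `supp c` keeps every tight row of `Z c` fixed. Suppose row `i` is
slack. Putting alternating weights `±1` on the edges of a walk in `supp c` from `i` to `v` gives a
direction `d` with `Z d = (e_i ∓ e_v) / 2`; hence there is no odd closed walk at `i`, and every
vertex other than `i` reachable from `i` is tight. The potential `w`, which is `±1` according to
the parity of walks from `i` and `0` elsewhere, then satisfies `w u + w v = 0` on every edge of
`supp c`, so
`0 = wᵀ Z c = y_i + ∑_{j ≠ i} w_j x_j`.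
-/

open Finset Filter Topology Matrix Relation

lemma Filter.Eventually.comp_add_mul_nhds_zero {a s : ℝ} {p : ℝ → Prop}
    (hp : ∀ᶠ y in 𝓝 a, p y) : ∀ᶠ t in 𝓝 (0 : ℝ), p (a + t * s) :=
  (Continuous.tendsto' (by fun_prop) 0 a (by simp)).eventually hp

lemma eq_zero_of_mem_extremePoints {V E : Type*} [Finite V] [Fintype E]
    {A : Matrix V E ℝ} {b : V → ℝ} {c d : E → ℝ}
    (hc : c ∈ Set.extremePoints ℝ {c | 0 ≤ c ∧ A *ᵥ c ≤ b})
    (hsupp : ∀ e, c e = 0 → d e = 0) (htight : ∀ v, (A *ᵥ c) v = b v → (A *ᵥ d) v = 0) :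
    d = 0 := by
  obtain ⟨⟨hc0, hcb⟩, hext⟩ := hc
  have hnonneg : ∀ e, ∀ᶠ t : ℝ in 𝓝 0, 0 ≤ c e + t * d e := by
    intro e
    rcases (hc0 e).eq_or_lt with h | h
    · simp [← h, hsupp e h.symm]
    · exact ((eventually_gt_nhds h).mono fun _ => le_of_lt).comp_add_mul_nhds_zero
  have hrow : ∀ v, ∀ᶠ t : ℝ in 𝓝 0, (A *ᵥ c) v + t * (A *ᵥ d) v ≤ b v := by
    intro v
    rcases (hcb v).eq_or_lt with h | h
    · simp [h, htight v h]
    · exact ((eventually_lt_nhds h).mono fun _ => le_of_lt).comp_add_mul_nhds_zero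
  have hmem : ∀ᶠ t : ℝ in 𝓝 0, c + t • d ∈ {c | 0 ≤ c ∧ A *ᵥ c ≤ b} := by
    filter_upwards [eventually_all.2 hnonneg, eventually_all.2 hrow] with t h0 hb
    exact ⟨h0, fun v => by simpa [mulVec_add, mulVec_smul] using hb v⟩
  have hmem_neg : ∀ᶠ t : ℝ in 𝓝 0, c + (-t) • d ∈ {c | 0 ≤ c ∧ A *ᵥ c ≤ b} :=
    (neg_zero (G := ℝ) ▸ tendsto_neg (0 : ℝ)).eventually hmem
  obtain ⟨t, ⟨hpos, hneg⟩, ht⟩ :=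
    (((hmem.and hmem_neg).filter_mono (nhdsWithin_le_nhds (s := {0}ᶜ))).and
      self_mem_nhdsWithin).exists
  have hmid : c ∈ openSegment ℝ (c + t • d) (c + (-t) • d) :=
    ⟨1 / 2, 1 / 2, by norm_num, by norm_num, by norm_num, by module⟩
  have : t = 0 ∨ d = 0 := by simpa using hext hpos hneg hmid
  exact this.resolve_left ht

section HalfIncidence

variable {V E : Type*}

/-- The bipartite double cover of the support graph of `c`: `(v, p)` is reachable from `(i, false)`
iff `supp c` contains a walk from `i` to `v` whose length has parity `p`. -/
def parityAdj (ep : E → V × V) (c : E → ℝ) (a b : V × Bool) : Prop :=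
  b.2 = !a.2 ∧ ∃ e, c e ≠ 0 ∧ (ep e = (a.1, b.1) ∨ ep e = (b.1, a.1))

lemma reflTransGen_parityAdj_iff (ep : E → V × V) {c : E → ℝ} {a : V × Bool} {e : E}
    (hce : c e ≠ 0) (p : Bool) :
    ReflTransGen (parityAdj ep c) a ((ep e).1, p) ↔
      ReflTransGen (parityAdj ep c) a ((ep e).2, !p) :=
  ⟨fun h => h.tail ⟨rfl, e, hce, Or.inl rfl⟩,
    fun h => by simpa using h.tail ⟨by simp, e, hce, Or.inr rfl⟩⟩

open Classical in
noncomputable def parityPotential (ep : E → V × V) (c : E → ℝ) (i v : V) : ℤ :=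
  (if ReflTransGen (parityAdj ep c) (i, false) (v, false) then 1 else 0) -
    (if ReflTransGen (parityAdj ep c) (i, false) (v, true) then 1 else 0)

lemma parityPotential_fst_add_snd {ep : E → V × V} {c : E → ℝ} {e : E} (hce : c e ≠ 0)
    (i : V) : parityPotential ep c i (ep e).1 + parityPotential ep c i (ep e).2 = 0 := by
  classical
  simp only [parityPotential, reflTransGen_parityAdj_iff ep hce false,
    reflTransGen_parityAdj_iff ep hce true, Bool.not_false, Bool.not_true]
  ring

variable [DecidableEq V]

noncomputable def halfIncidence (ep : E → V × V) : Matrix V E ℝ :=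
  Matrix.of fun v e => ((if (ep e).1 = v then 1 else 0) + (if (ep e).2 = v then 1 else 0)) / 2

lemma vecMul_halfIncidence [Fintype V] (ep : E → V × V) (w : V → ℝ) (e : E) :
    (w ᵥ* halfIncidence ep) e = (w (ep e).1 + w (ep e).2) / 2 := by
  simp only [vecMul, dotProduct, halfIncidence, of_apply, mul_div_assoc', mul_add, mul_ite,
    mul_one, mul_zero, ← sum_div, sum_add_distrib, sum_ite_eq, mem_univ, if_true]

lemma halfIncidence_mulVec_single [Fintype E] [DecidableEq E] (ep : E → V × V) (e : E) :
    halfIncidence ep *ᵥ Pi.single e 1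
      = (2 : ℝ)⁻¹ • (Pi.single (ep e).1 1 + Pi.single (ep e).2 1) := by
  ext v
  simp [halfIncidence, Pi.single_apply, eq_comm, add_div, inv_mul_eq_div]

lemma dotProduct_halfIncidence_mulVec_eq_zero [Fintype V] [Fintype E] {ep : E → V × V}
    {w : V → ℝ} {c : E → ℝ} (hw : ∀ e, c e ≠ 0 → w (ep e).1 + w (ep e).2 = 0) :
    w ⬝ᵥ (halfIncidence ep *ᵥ c) = 0 := by
  rw [dotProduct_mulVec]
  refine sum_eq_zero fun e _ => ?_
  rw [vecMul_halfIncidence]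
  by_cases hce : c e = 0
  · simp [hce]
  · simp [hw e hce]

lemma exists_halfIncidence_mulVec_eq [Fintype E] [DecidableEq E] {ep : E → V × V}
    {c : E → ℝ} {i : V} {a : V × Bool} (h : ReflTransGen (parityAdj ep c) (i, false) a) :
    ∃ d : E → ℝ, (∀ e, c e = 0 → d e = 0) ∧
      halfIncidence ep *ᵥ d
        = (2 : ℝ)⁻¹ • (Pi.single i 1 - (bif a.2 then -1 else 1) • Pi.single a.1 1) := by
  induction h with
  | refl => exact ⟨0, fun _ _ => rfl, by simp⟩
  | @tail a b _ hab ih =>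
    obtain ⟨d, hsupp, hd⟩ := ih
    obtain ⟨hb, e, hce, hep⟩ := hab
    have hcol : halfIncidence ep *ᵥ Pi.single e 1
        = (2 : ℝ)⁻¹ • (Pi.single a.1 1 + Pi.single b.1 1) := by
      rw [halfIncidence_mulVec_single]
      rcases hep with h | h <;> rw [h]
      rw [add_comm]
    refine ⟨d + (bif a.2 then -1 else 1 : ℝ) • Pi.single e 1, fun f hf => ?_, ?_⟩
    · have : f ≠ e := fun h => hce (h ▸ hf)
      simp [hsupp f hf, Pi.single_eq_of_ne this]
    · rw [mulVec_add, mulVec_smul, hd, hcol, hb]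
      cases a.2 <;> simp only [Bool.not_false, Bool.not_true, cond_false, cond_true] <;> module

variable [Fintype V] [Fintype E] {ep : E → V × V} {b : V → ℝ} {c : E → ℝ} {i : V}

lemma eq_of_reflTransGen_parityAdj_of_ne
    (hc : c ∈ Set.extremePoints ℝ {c | 0 ≤ c ∧ halfIncidence ep *ᵥ c ≤ b})
    (hi : (halfIncidence ep *ᵥ c) i ≠ b i) {a : V × Bool}
    (ha : ReflTransGen (parityAdj ep c) (i, false) a)
    (ha' : (halfIncidence ep *ᵥ c) a.1 ≠ b a.1) :
    a = (i, false) := by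
  classical
  obtain ⟨d, hsupp, hd⟩ := exists_halfIncidence_mulVec_eq ha
  have hd0 : d = 0 := eq_zero_of_mem_extremePoints hc hsupp fun v hv => by
    have hvi : v ≠ i := by rintro rfl; exact hi hv
    have hva : v ≠ a.1 := by rintro rfl; exact ha' hv
    simp [hd, hvi, hva]
  have hdi := congrFun hd i
  rw [hd0, mulVec_zero] at hdi
  obtain ⟨v, p⟩ := a
  by_cases hv : v = i <;> cases p <;> simp [hv] at hdi ⊢

theorem halfIncidence_mulVec_integral_of_mem_extremePoints
    (hc : c ∈ Set.extremePoints ℝ {c | 0 ≤ c ∧ halfIncidence ep *ᵥ c ≤ b})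
    (hb : ∀ v, ∃ n : ℤ, b v = n) (i : V) : ∃ n : ℤ, (halfIncidence ep *ᵥ c) i = n := by
  by_cases hi : (halfIncidence ep *ᵥ c) i = b i
  · exact hi ▸ hb i
  set w := parityPotential ep c i
  have hwi : w i = 1 := by
    have hodd : ¬ ReflTransGen (parityAdj ep c) (i, false) (i, true) := fun h => by
      simpa using eq_of_reflTransGen_parityAdj_of_ne hc hi h hi
    simp [w, parityPotential, hodd, ReflTransGen.refl]
  have hw : ∀ j ≠ i, (w j : ℝ) * (halfIncidence ep *ᵥ c) j = w j * b j := by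
    intro j hj
    by_cases htight : (halfIncidence ep *ᵥ c) j = b j
    · rw [htight]
    have hunreached : ∀ p, ¬ ReflTransGen (parityAdj ep c) (i, false) (j, p) := fun p h =>
      hj (Prod.ext_iff.1 (eq_of_reflTransGen_parityAdj_of_ne hc hi h htight)).1
    simp [w, parityPotential, hunreached]
  have hzero : (fun v => (w v : ℝ)) ⬝ᵥ (halfIncidence ep *ᵥ c) = 0 :=
    dotProduct_halfIncidence_mulVec_eq_zero fun e hce => by
      exact_mod_cast parityPotential_fst_add_snd hce i
  choose n hn using hb
  refine ⟨-∑ j ∈ univ.erase i, w j * n j, ?_⟩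
  rw [dotProduct, ← add_sum_erase _ _ (mem_univ i), hwi,
    sum_congr rfl fun j hj => hw j (ne_of_mem_erase hj)] at hzero
  push_cast [hn] at hzero ⊢
  linarith

end HalfIncidence

theorem y_of_vertex_is_integral_general
    (q m : ℕ) (ep : Fin m → Fin q × Fin q) (x : Fin q → ℕ)
    (c : Fin m → ℝ)
    (hc : c ∈ Set.extremePoints ℝ
      {c : Fin m → ℝ |
        ((∀ e, 0 ≤ c e) ∧
          ∀ i, ∑ e, ((if (ep e).1 = i then (1 : ℝ) else 0)
            + (if (ep e).2 = i then (1 : ℝ) else 0)) / 2 * c e ≤ (x i : ℝ)) ∧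
        ∀ c' : Fin m → ℝ, (∀ e, 0 ≤ c' e) →
          (∀ i, ∑ e, ((if (ep e).1 = i then (1 : ℝ) else 0)
            + (if (ep e).2 = i then (1 : ℝ) else 0)) / 2 * c' e ≤ (x i : ℝ)) →
          ∑ e, c' e ≤ ∑ e, c e}) :
    ∀ i, ∃ n : ℤ,
      ∑ e, ((if (ep e).1 = i then (1 : ℝ) else 0)
        + (if (ep e).2 = i then (1 : ℝ) else 0)) / 2 * c e = (n : ℝ) := by
  set P : Set (Fin m → ℝ) := {c | 0 ≤ c ∧ halfIncidence ep *ᵥ c ≤ fun i => (x i : ℝ)}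
  have hface : IsExtreme ℝ P
      ((∑ e, ContinuousLinearMap.proj e : StrongDual ℝ (Fin m → ℝ)).toExposed P) :=
    ContinuousLinearMap.toExposed.isExposed.isExtreme
  have hvertex : c ∈ P.extremePoints ℝ := by
    refine hface.extremePoints_subset_extremePoints ?_
    convert hc using 3
    simp only [ContinuousLinearMap.toExposed, P, Set.mem_ofPred_eq, and_imp, FunLike.coe_sum,
      Finset.sum_apply, ContinuousLinearMap.proj_apply]
    rfl
  exact halfIncidence_mulVec_integral_of_mem_extremePoints hvertex fun i => ⟨x i, by simp⟩

/-- If `c` is a vertex (extreme point) of the polytope of optimal solutions of the LP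
`max 1ᵀc s.t. Zc ≤ x, c ≥ 0` (with `x` a positive integer vector), then `y = Zc`
is integer valued. -/
theorem y_of_vertex_is_integral
    (q m : ℕ) (ep : Fin m → Fin q × Fin q) (x : Fin q → ℕ) (hx : ∀ i, 0 < x i)
    (c : Fin m → ℝ)
    (hc : c ∈ Set.extremePoints ℝ
      {c : Fin m → ℝ |
        ((∀ e, 0 ≤ c e) ∧
          ∀ i, ∑ e, ((if (ep e).1 = i then (1 : ℝ) else 0)
            + (if (ep e).2 = i then (1 : ℝ) else 0)) / 2 * c e ≤ (x i : ℝ)) ∧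
        ∀ c' : Fin m → ℝ, (∀ e, 0 ≤ c' e) →
          (∀ i, ∑ e, ((if (ep e).1 = i then (1 : ℝ) else 0)
            + (if (ep e).2 = i then (1 : ℝ) else 0)) / 2 * c' e ≤ (x i : ℝ)) →
          ∑ e, c' e ≤ ∑ e, c e}) :
    ∀ i, ∃ n : ℤ,
      ∑ e, ((if (ep e).1 = i then (1 : ℝ) else 0)
        + (if (ep e).2 = i then (1 : ℝ) else 0)) / 2 * c e = (n : ℝ) :=
  y_of_vertex_is_integral_general q m ep x c hc
end

section
/- Let S be a finite connected undirected graph on q nodes, possibly with self-loops, with m edges, and let c ∈ ℕ^m (strictly positive on every edge) and y = Zc ∈ ℕ^q with 1^T y ≥ 3. Then the complete S-partite graph K_y, having y_i vertices over node u_i, contains a Hamilton cycle. -/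
/-!
Let `E` be the multiset of edges of `S` in which edge `e` occurs `c e` times. Node `i` has degree
`2 * y i` in `E` and `E` is connected, so by Euler's theorem there is a closed walk in `S` using
every edge of `E` exactly once; it has length `∑ i, y i ≥ 3` and visits node `i` exactly `y i`
times. Matching the visits of node `i` bijectively with `V_i`, for every `i`, gives a bijection from the
positions of the walk onto the vertices of `K_y`; it maps cyclically consecutive positions to
distinct vertices over adjacent nodes, hence to adjacent vertices, so it carries the Hamiltonian
cycle of the cycle graph on the positions to one of `K_y`.
-/

lemma Multiset.cons_le_of_mem_sub {β : Type*} [DecidableEq β] {W E : Multiset β} {z : β}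
    (hW : W ≤ E) (hz : z ∈ E - W) : z ::ₘ W ≤ E := by
  rw [← tsub_add_cancel_of_le hW, ← Multiset.singleton_add]
  gcongr
  exact Multiset.singleton_le.2 hz

lemma Multiset.mem_sum_replicate_iff {β ι : Type*} [Fintype ι] {f : ι → β} {c : ι → ℕ}
    (hc : ∀ e, 0 < c e) {z : β} : z ∈ ∑ e, Multiset.replicate (c e) (f e) ↔ ∃ e, z = f e := by
  simp [Multiset.mem_sum, Multiset.mem_replicate, fun e => (hc e).ne']

namespace Multigraph

variable {α : Type*}

/-- A loop `s(a, a)` contributes `a` twice, so `(endpoints E).count x` is the degree of `x`. -/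
def endpoints (E : Multiset (Sym2 α)) : Multiset α := E.bind Sym2.toMultiset

def walkEdges (l : List α) : Multiset (Sym2 α) :=
  List.zipWith (fun a b => s(a, b)) l.dropLast l.tail

def cycleEdges (l : List α) : Multiset (Sym2 α) :=
  List.zipWith (fun a b => s(a, b)) l (l.rotate 1)

lemma endpoints_add (E F : Multiset (Sym2 α)) :
    endpoints (E + F) = endpoints E + endpoints F :=
  Multiset.add_bind _ _ _

lemma mem_endpoints {E : Multiset (Sym2 α)} {x : α} : x ∈ endpoints E ↔ ∃ z ∈ E, x ∈ z := by
  simp [endpoints, Multiset.mem_bind]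

lemma endpoints_zipWith : ∀ l l' : List α, l.length = l'.length →
    endpoints (List.zipWith (fun a b => s(a, b)) l l' : Multiset (Sym2 α)) = l + l'
  | [], [], _ => rfl
  | a :: l, b :: l', h => by
    have ih := endpoints_zipWith l l' (by simpa using h)
    simp only [List.zipWith_cons_cons, ← Multiset.cons_coe, endpoints, Multiset.cons_bind] at ih ⊢
    rw [ih]
    simpa [Sym2.toMultiset] using List.perm_middle.symm

lemma endpoints_walkEdges (l : List α) : endpoints (walkEdges l) = l.dropLast + l.tail :=
  endpoints_zipWith _ _ (by simp)

lemma endpoints_cycleEdges (l : List α) : endpoints (cycleEdges l) = l + l := by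
  rw [cycleEdges, endpoints_zipWith _ _ (by simp), Multiset.coe_eq_coe.2 (l.rotate_perm 1)]

lemma card_walkEdges (l : List α) : Multiset.card (walkEdges l) = l.length - 1 := by
  simp [walkEdges]

lemma length_le_of_walkEdges_le {l : List α} {E : Multiset (Sym2 α)} (h : walkEdges l ≤ E) :
    l.length ≤ Multiset.card E + 1 := by
  have := Multiset.card_le_card h
  rw [card_walkEdges] at this
  omega

lemma cycleEdges_rotate (l : List α) (n : ℕ) : cycleEdges (l.rotate n) = cycleEdges l := by
  rw [cycleEdges, List.rotate_rotate, add_comm, ← List.rotate_rotate,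
    ← List.zipWith_rotate_distrib _ _ _ _ (by simp)]
  exact Multiset.coe_eq_coe.2 (List.rotate_perm _ _)

lemma walkEdges_concat {l : List α} (hl : l ≠ []) (w : α) :
    walkEdges (l ++ [w]) = s(l.getLast hl, w) ::ₘ walkEdges l := by
  rw [walkEdges, List.dropLast_concat, List.tail_append_of_ne_nil hl]
  nth_rewrite 1 [← List.dropLast_append_getLast hl]
  rw [List.zipWith_append (by simp)]
  simp [walkEdges, List.perm_append_singleton]

lemma walkEdges_cons_append_self (a : α) (t : List α) :
    walkEdges (a :: t ++ [a]) = cycleEdges (a :: t) := by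
  rw [walkEdges, List.dropLast_concat]
  simp [cycleEdges]

lemma walkEdges_eq_cycleEdges_dropLast {l : List α} (hl : l ≠ [])
    (hclosed : l.getLast hl = l.head hl) : walkEdges l = cycleEdges l.dropLast := by
  obtain ⟨c, x, rfl⟩ : ∃ c x, l = c ++ [x] := ⟨_, _, (List.dropLast_append_getLast hl).symm⟩
  rcases c with _ | ⟨a, t⟩
  · rfl
  · have hxa : x = a := by simpa using hclosed
    rw [hxa, walkEdges_cons_append_self, List.dropLast_concat]

lemma getElem_mem_cycleEdges (l : List α) (k : ℕ) (hk : k < l.length) :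
    s(l[k], l[(k + 1) % l.length]'(Nat.mod_lt _ (by omega))) ∈ cycleEdges l := by
  have hk' : k < (List.zipWith (fun a b => s(a, b)) l (l.rotate 1)).length := by simpa
  have := List.getElem_mem hk'
  exact Multiset.mem_coe.2 (by simpa [List.getElem_rotate] using this)

section Euler

variable [DecidableEq α] {E : Multiset (Sym2 α)}

lemma odd_count_endpoints_walkEdges {l : List α} (hl : l ≠ []) (hopen : l.getLast hl ≠ l.head hl) :
    Odd ((endpoints (walkEdges l)).count (l.getLast hl)) := by
  set b := l.getLast hl
  have hdrop : l.count b = l.dropLast.count b + 1 := by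
    conv_lhs => rw [← List.dropLast_append_getLast hl]
    simp [List.count_append, b]
  have htail : l.count b = l.tail.count b := by
    obtain ⟨a, t, rfl⟩ := List.exists_cons_of_ne_nil hl
    exact List.count_cons_of_ne (Ne.symm hopen)
  rw [endpoints_walkEdges, Multiset.count_add, Multiset.coe_count, Multiset.coe_count]
  exact ⟨l.dropLast.count b, by omega⟩

lemma exists_mem_sub_of_odd (heven : ∀ x, Even ((endpoints E).count x)) {W : Multiset (Sym2 α)}
    (hWE : W ≤ E) {x : α} (hodd : Odd ((endpoints W).count x)) : ∃ w, s(x, w) ∈ E - W := by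
  have hsplit : endpoints E = endpoints (E - W) + endpoints W := by
    rw [← endpoints_add, tsub_add_cancel_of_le hWE]
  have hpos : x ∈ endpoints (E - W) := by
    rw [← Multiset.count_pos]
    obtain ⟨r, hr⟩ := heven x
    obtain ⟨k, hk⟩ := hodd
    rw [hsplit, Multiset.count_add] at hr
    omega
  obtain ⟨z, hz, hxz⟩ := mem_endpoints.1 hpos
  obtain ⟨w, rfl⟩ := Sym2.mem_iff_exists.1 hxz
  exact ⟨w, hz⟩

lemma exists_walkEdges_concat_le (heven : ∀ x, Even ((endpoints E).count x)) {l : List α}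
    (hl : l ≠ []) (hopen : l.getLast hl ≠ l.head hl) (hle : walkEdges l ≤ E) :
    ∃ w, walkEdges (l ++ [w]) ≤ E := by
  obtain ⟨w, hw⟩ := exists_mem_sub_of_odd heven hle (odd_count_endpoints_walkEdges hl hopen)
  exact ⟨w, walkEdges_concat hl w ▸ Multiset.cons_le_of_mem_sub hle hw⟩

lemma exists_mem_sub_of_ne (hconn : ∀ u w, Relation.ReflTransGen (fun a b => s(a, b) ∈ E) u w)
    {W : Multiset (Sym2 α)} {c : List α} (hc : c ≠ []) (hWE : W ≤ E) (hWne : W ≠ E)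
    (hWc : ∀ x ∈ endpoints W, x ∈ c) : ∃ v ∈ c, ∃ w, s(v, w) ∈ E - W := by
  have key : ∀ x, Relation.ReflTransGen (fun a b => s(a, b) ∈ E) x (c.head hc) →
      (∃ w, s(x, w) ∈ E - W) → ∃ v ∈ c, ∃ w, s(v, w) ∈ E - W := by
    intro x hx
    induction hx using Relation.ReflTransGen.head_induction_on with
    | refl => exact fun h => ⟨_, List.head_mem hc, h⟩
    | @head x y hxy _ ih =>
      intro hx
      by_cases hxc : x ∈ c
      · exact ⟨x, hxc, hx⟩
      have hxW : s(x, y) ∉ W := fun h => hxc (hWc x (mem_endpoints.2 ⟨_, h, Sym2.mem_mk_left x y⟩))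
      refine ih ⟨x, ?_⟩
      rw [Sym2.eq_swap, Multiset.mem_sub, Multiset.count_eq_zero.2 hxW]
      exact Multiset.count_pos.2 hxy
  have hsub : E - W ≠ 0 := fun h => hWne (le_antisymm hWE (tsub_eq_zero_iff_le.1 h))
  obtain ⟨z, hz⟩ := Multiset.exists_mem_of_ne_zero hsub
  induction z using Sym2.ind with
  | h x w => exact key x (hconn _ _) ⟨w, hz⟩

lemma exists_walkEdges_le_of_cycleEdges_lt
    (hconn : ∀ u w, Relation.ReflTransGen (fun a b => s(a, b) ∈ E) u w) {c : List α} (hc : c ≠ [])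
    (hle : cycleEdges c ≤ E) (hne : cycleEdges c ≠ E) :
    ∃ l, l.length = c.length + 2 ∧ walkEdges l ≤ E := by
  obtain ⟨v, hv, w, hw⟩ := exists_mem_sub_of_ne hconn hc hle hne fun x hx => by
    simpa [endpoints_cycleEdges] using hx
  obtain ⟨p, s, rfl⟩ := List.append_of_mem hv
  have hrot : cycleEdges (v :: (s ++ p)) = cycleEdges (p ++ v :: s) := by
    rw [← cycleEdges_rotate (p ++ v :: s) p.length, List.rotate_append_length_eq]
    rfl
  refine ⟨v :: (s ++ p) ++ [v] ++ [w], by simp; omega, ?_⟩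
  rw [walkEdges_concat (by simp), walkEdges_cons_append_self, hrot]
  simpa using Multiset.cons_le_of_mem_sub hle hw

/-- An open trail extends at its end, which has odd degree in the trail; a closed trail missing an
edge of `E` is rotated, by connectivity, to a vertex with an unused edge and extended there.
Trails have at most `card E` edges, so this ends in an Euler circuit. -/
theorem exists_cycleEdges_eq_of_walkEdges_le (heven : ∀ x, Even ((endpoints E).count x))
    (hconn : ∀ u w, Relation.ReflTransGen (fun a b => s(a, b) ∈ E) u w) (l : List α)
    (hl : 2 ≤ l.length) (hle : walkEdges l ≤ E) : ∃ c, cycleEdges c = E := by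
  have hl0 : l ≠ [] := List.ne_nil_of_length_pos (by omega)
  by_cases hclosed : l.getLast hl0 = l.head hl0
  · rw [walkEdges_eq_cycleEdges_dropLast hl0 hclosed] at hle
    by_cases hE : cycleEdges l.dropLast = E
    · exact ⟨_, hE⟩
    have hc : l.dropLast ≠ [] := List.ne_nil_of_length_pos (by simp; omega)
    obtain ⟨l', hlen, hle'⟩ := exists_walkEdges_le_of_cycleEdges_lt hconn hc hle hE
    have := length_le_of_walkEdges_le hle'
    have hlen' : l'.length = l.length + 1 := by simp only [hlen, List.length_dropLast]; omega
    exact exists_cycleEdges_eq_of_walkEdges_le heven hconn l' (by omega) hle'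
  · obtain ⟨w, hw⟩ := exists_walkEdges_concat_le heven hl0 hclosed hle
    have := length_le_of_walkEdges_le hw
    have hlen : (l ++ [w]).length = l.length + 1 := by simp
    exact exists_cycleEdges_eq_of_walkEdges_le heven hconn (l ++ [w]) (by omega) hw
termination_by Multiset.card E + 1 - l.length
decreasing_by all_goals omega

theorem exists_cycleEdges_eq (heven : ∀ x, Even ((endpoints E).count x))
    (hconn : ∀ u w, Relation.ReflTransGen (fun a b => s(a, b) ∈ E) u w) :
    ∃ c, cycleEdges c = E := by
  rcases eq_or_ne E 0 with rfl | hE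
  · exact ⟨[], rfl⟩
  obtain ⟨z, hz⟩ := Multiset.exists_mem_of_ne_zero hE
  induction z using Sym2.ind with
  | h u w =>
    refine exists_cycleEdges_eq_of_walkEdges_le heven hconn [u, w] le_rfl ?_
    simpa [walkEdges] using hz

end Euler

lemma endpoints_sum {ι : Type*} (s : Finset ι) (F : ι → Multiset (Sym2 α)) :
    endpoints (∑ i ∈ s, F i) = ∑ i ∈ s, endpoints (F i) :=
  map_sum (⟨⟨endpoints, Multiset.zero_bind _⟩, endpoints_add⟩ : Multiset (Sym2 α) →+ Multiset α) F s

lemma count_endpoints_sum_replicate [DecidableEq α] {ι : Type*} [Fintype ι] (ep : ι → α × α)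
    (c : ι → ℕ) (x : α) :
    (endpoints (∑ e, Multiset.replicate (c e) (s((ep e).1, (ep e).2)))).count x =
      ∑ e, ((if (ep e).1 = x then c e else 0) + (if (ep e).2 = x then c e else 0)) := by
  rw [endpoints_sum, Multiset.count_sum']
  refine Finset.sum_congr rfl fun e _ => ?_
  obtain ⟨a, b⟩ := ep e
  simp only [endpoints, Multiset.count_bind, Multiset.map_replicate, Multiset.sum_replicate,
    smul_eq_mul]
  split_ifs <;> simp [Sym2.toMultiset, *, mul_two]

end Multigraph

namespace SimpleGraph

lemma exists_isHamiltonianCycle_of_adj_finRotate {V : Type*} [DecidableEq V] {G : SimpleGraph V}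
    {N : ℕ} (hN : 3 ≤ N) (e : Fin N ≃ V) (h : ∀ k, G.Adj (e k) (e (finRotate N k))) :
    ∃ (v : V) (p : G.Walk v v), p.IsHamiltonianCycle := by
  obtain ⟨n, rfl⟩ : ∃ n, N = n + 3 := ⟨N - 3, by omega⟩
  simp only [finRotate_apply] at h
  let f : cycleGraph (n + 3) →g G :=
    ⟨e, fun {a b} hab => by
      rcases (cycleGraph_adj (n := n + 1)).1 hab with hab | hab
      · rw [sub_eq_iff_eq_add'] at hab
        exact hab ▸ (h b).symm
      · rw [sub_eq_iff_eq_add'] at hab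
        exact hab ▸ h a⟩
  have hcycle : (cycleGraph.cycle n).IsHamiltonianCycle :=
    Walk.isHamiltonianCycle_iff_isCycle_and_length_eq.2 ⟨cycleGraph.isCycle_cycle, by simp⟩
  exact ⟨_, _, hcycle.map (f := f) e.bijective⟩

end SimpleGraph

lemma exists_equiv_sigma_fin_of_card_fiber {α ι : Type*} [Fintype α] [DecidableEq ι] (f : α → ι)
    (y : ι → ℕ) (h : ∀ i, Fintype.card {a // f a = i} = y i) :
    ∃ e : α ≃ Σ i, Fin (y i), ∀ a, (e a).1 = f a :=
  ⟨(Equiv.sigmaFiberEquiv f).symm.trans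
    (Equiv.sigmaCongrRight fun i => Fintype.equivFinOfCardEq (h i)), fun _ => rfl⟩

lemma List.card_subtype_getElem_eq_count {ι : Type*} [DecidableEq ι] (L : List ι) (i : ι) :
    Fintype.card {k : Fin L.length // L[k] = i} = L.count i := by
  rw [Fintype.card_subtype]
  exact Fin.card_filter_univ_eq_vector_get_eq_count i ⟨L, rfl⟩

lemma val_finRotate_eq_mod (N : ℕ) (k : Fin N) : (finRotate N k : ℕ) = (k + 1) % N := by
  have := k.neZero
  rw [finRotate_apply, Fin.val_add, Fin.val_one', Nat.add_mod_mod]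

theorem exists_isHamiltonianCycle_of_cyclic_walk {ι : Type*} [DecidableEq ι] {y : ι → ℕ}
    {R : ι → ι → Prop} (K : SimpleGraph (Σ i, Fin (y i)))
    (hK : ∀ v w, K.Adj v w ↔ v ≠ w ∧ R v.1 w.1) (L : List ι) (hL : 3 ≤ L.length)
    (hcount : ∀ i, L.count i = y i)
    (hR : ∀ k (hk : k < L.length), R L[k] (L[(k + 1) % L.length]'(Nat.mod_lt _ (by omega)))) :
    ∃ (v : Σ i, Fin (y i)) (p : K.Walk v v), p.IsHamiltonianCycle := by
  obtain ⟨e, he⟩ := exists_equiv_sigma_fin_of_card_fiber (fun k : Fin L.length => L[k]) y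
    fun i => (L.card_subtype_getElem_eq_count i).trans (hcount i)
  refine SimpleGraph.exists_isHamiltonianCycle_of_adj_finRotate hL e fun k => (hK _ _).2 ⟨?_, ?_⟩
  · refine e.injective.ne (Ne.symm (Equiv.Perm.mem_support.1 ?_))
    simp [support_finRotate_of_le (by omega : 2 ≤ L.length)]
  · simpa only [he, Fin.getElem_fin, val_finRotate_eq_mod] using hR k k.isLt

open Multigraph in
/-- Let `S` be a finite connected undirected graph on `q` nodes, possibly with
self-loops, with `m` edges, and let `c ∈ ℕ^m` be strictly positive on every edge
and `y = Zc ∈ ℕ^q` (so `2 y i` equals the `c`-weighted degree of node `i`) with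
`1ᵀy ≥ 3`. Then the complete `S`-partite graph `K_y`, having `y i` vertices over
node `u_i` (distinct vertices over `u_i`, `u_j` adjacent iff `(u_i,u_j) ∈ E(S)`),
contains a Hamilton cycle. -/
theorem complete_S_partite_hamiltonian
    (q m : ℕ) (ep : Fin m → Fin q × Fin q)
    (adjS : Fin q → Fin q → Prop)
    (hadj : ∀ i j, adjS i j ↔ ∃ e, ep e = (i, j) ∨ ep e = (j, i))
    (hconn : ∀ i j : Fin q, Relation.ReflTransGen adjS i j)
    (c : Fin m → ℕ) (hc : ∀ e, 0 < c e)
    (y : Fin q → ℕ)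
    (hy : ∀ i, 2 * y i = ∑ e, ((if (ep e).1 = i then c e else 0)
        + (if (ep e).2 = i then c e else 0)))
    (hN : 3 ≤ ∑ i, y i)
    (K : SimpleGraph (Σ i : Fin q, Fin (y i)))
    (hK : ∀ v w : Σ i : Fin q, Fin (y i), K.Adj v w ↔ v ≠ w ∧ adjS v.1 w.1) :
    ∃ (v : Σ i : Fin q, Fin (y i)) (p : K.Walk v v), p.IsHamiltonianCycle := by
  set E : Multiset (Sym2 (Fin q)) := ∑ e, Multiset.replicate (c e) s((ep e).1, (ep e).2)
  have hE : ∀ i j, s(i, j) ∈ E ↔ adjS i j := fun i j => by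
    rw [Multiset.mem_sum_replicate_iff hc, hadj]
    refine exists_congr fun e => ?_
    rw [Sym2.eq_iff, Prod.ext_iff, Prod.ext_iff]
    grind
  have hdeg : ∀ i, (endpoints E).count i = 2 * y i := fun i => by
    rw [count_endpoints_sum_replicate, hy]
  obtain ⟨L, hL⟩ := exists_cycleEdges_eq (E := E) (fun i => hdeg i ▸ even_two_mul _)
    fun i j => Relation.ReflTransGen.mono (fun a b => (hE a b).2) i j (hconn i j)
  have hcount : ∀ i, L.count i = y i := fun i => by
    have := congrArg (Multiset.count i) (endpoints_cycleEdges L)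
    rw [hL, hdeg, Multiset.count_add, Multiset.coe_count] at this
    omega
  have hlen : L.length = ∑ i, y i := by
    rw [← Multiset.coe_card, ← Multiset.sum_count_eq_card (s := Finset.univ) (by simp)]
    simp [hcount]
  refine exists_isHamiltonianCycle_of_cyclic_walk K hK L (hlen ▸ hN) hcount fun k hk => (hE _ _).1 ?_
  rw [← hL]
  exact getElem_mem_cycleEdges L k hk
end
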